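/- arXiv:quant-ph/0403107 — 9 statements merged into one kernel-verified Lean document; each statement's English description precedes it below -/
import Mathlib

section
/- If X : ℤ × ℕ → ℂ satisfies the recurrence X(k, n+2) = cos θ · (X(k+1, n+1) − X(k−1, n+1)) + X(k, n) with initial data X(0,0) = 0, X(−1,1) = β, X(1,1) = e^{iξ}·β for real β and ξ, and all other values at times 0 and 1 zero, then for all k ∈ ℤ and n ∈ ℕ, X(k, n) = (−1)^{n+1} · e^{iξ} · conj(X(−k, n)). -/
theorem stmt1 (θ : ℝ) (β ξ : ℝ) (X : ℤ × ℕ → ℂ)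
    (hrec : ∀ (k : ℤ) (n : ℕ),
      X (k, n + 2) = (Real.cos θ : ℂ) * (X (k + 1, n + 1) - X (k - 1, n + 1)) + X (k, n))
    (h00 : X (0, 0) = 0) (hm1 : X (-1, 1) = (β : ℂ))
    (hp1 : X (1, 1) = Complex.exp (ξ * Complex.I) * (β : ℂ))
    (h0 : ∀ k : ℤ, k ≠ 0 → X (k, 0) = 0)
    (h1 : ∀ k : ℤ, k ≠ -1 → k ≠ 1 → X (k, 1) = 0) :
    ∀ (k : ℤ) (n : ℕ),
      X (k, n) = (-1 : ℂ) ^ (n + 1) * Complex.exp (ξ * Complex.I) *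
        (starRingEnd ℂ) (X (-k, n)) := by
  have hee : Complex.exp (ξ * Complex.I) * (starRingEnd ℂ) (Complex.exp (ξ * Complex.I)) = 1 := by
    have : (starRingEnd ℂ) (Complex.exp (ξ * Complex.I)) = Complex.exp (-(ξ * Complex.I)) := by
      rw [← Complex.exp_conj]
      congr 1
      simp [Complex.conj_ofReal]
    rw [this, ← Complex.exp_add, add_neg_cancel, Complex.exp_zero]
  suffices H : ∀ n (k : ℤ),
      X (k, n) = (-1 : ℂ) ^ (n + 1) * Complex.exp (ξ * Complex.I) *
        (starRingEnd ℂ) (X (-k, n)) from fun k n => H n k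
  intro n
  induction n using Nat.twoStepInduction with
  | zero =>
    intro k
    by_cases hk : k = 0
    · subst hk; simp only [neg_zero, h00, map_zero, mul_zero]
    · rw [h0 k hk, h0 (-k) (neg_ne_zero.mpr hk)]; simp
  | one =>
    intro k
    by_cases hk1 : k = 1
    · subst hk1
      rw [hp1, hm1, Complex.conj_ofReal]
      ring
    by_cases hkm1 : k = -1
    · subst hkm1
      rw [hm1]
      simp only [neg_neg, hp1, map_mul, Complex.conj_ofReal]
      rw [show (-1 : ℂ) ^ (1 + 1) * Complex.exp (ξ * Complex.I) *
          ((starRingEnd ℂ) (Complex.exp (ξ * Complex.I)) * (β : ℂ)) =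
          (Complex.exp (ξ * Complex.I) * (starRingEnd ℂ) (Complex.exp (ξ * Complex.I))) * (β : ℂ)
          from by ring, hee, one_mul]
    · rw [h1 k hkm1 hk1, h1 (-k) (by omega) (by omega)]
      simp
  | more n ih1 ih2 =>
    intro k
    rw [hrec k n, hrec (-k) n, ih2 (k + 1), ih2 (k - 1), ih1 k,
      show -(k + 1) = -k - 1 from by ring, show -(k - 1) = -k + 1 from by ring]
    simp only [map_add, map_mul, map_sub, Complex.conj_ofReal, pow_succ]
    ring
end

section
/- For the RCA with initial state (α, β, γ), the first moment at time 3 equals m(3) = (1/2)(3 cos²(2θ) + 2 cos(2θ) + 1)(|γ|² − |β|²) − (1/2) sin θ · sin(2θ) · (α·conj(β+γ) + conj(α)·(β+γ)). -/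
/-!
The walk spreads by one site per time step and only reaches sites of the parity of the time,
so at time 3 only the sites `±1, ±3` carry amplitude. Iterating the recursion twice expresses
these four amplitudes as polynomials in `c = cos θ` with coefficients `α, β, γ`; expanding the
moment and using `cos 2θ = 2c² - 1`, `sin θ sin 2θ = 2c(1 - c²)` gives the formula.
-/

open ComplexConjugate

namespace RCA

structure IsSolution (c α β γ : ℂ) (X : ℤ × ℕ → ℂ) : Prop where
  recursion : ∀ (k : ℤ) (n : ℕ), X (k, n + 2) = c * (X (k + 1, n + 1) - X (k - 1, n + 1)) + X (k, n)
  zero_zero : X (0, 0) = α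
  neg_one_one : X (-1, 1) = β
  one_one : X (1, 1) = γ
  zero_of_ne : ∀ k : ℤ, k ≠ 0 → X (k, 0) = 0
  one_of_ne : ∀ k : ℤ, k ≠ -1 → k ≠ 1 → X (k, 1) = 0

variable {c α β γ : ℂ} {X : ℤ × ℕ → ℂ}

theorem tsum_int_mul_sq_norm_of_eq_zero {f : ℤ → ℂ}
    (hf : ∀ k : ℤ, k ≠ -3 → k ≠ -1 → k ≠ 1 → k ≠ 3 → f k = 0) :
    ∑' k : ℤ, (k : ℝ) * ‖f k‖ ^ 2 =
      -3 * ‖f (-3)‖ ^ 2 - ‖f (-1)‖ ^ 2 + ‖f 1‖ ^ 2 + 3 * ‖f 3‖ ^ 2 := by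
  rw [tsum_eq_sum (s := {-3, -1, 1, 3})]
  · norm_num [Finset.sum_insert]
    ring
  · intro k hk
    simp only [Finset.mem_insert, Finset.mem_singleton, not_or] at hk
    simp [hf k hk.1 hk.2.1 hk.2.2.1 hk.2.2.2]

namespace IsSolution

theorem eq_zero_of_outside_cone (hX : IsSolution c α β γ X) (n : ℕ) (k : ℤ)
    (hk : (n : ℤ) < k ∨ k < -n ∨ (k + n) % 2 = 1) : X (k, n) = 0 := by
  induction n using Nat.twoStepInduction generalizing k with
  | zero => exact hX.zero_of_ne k (by omega)
  | one => exact hX.one_of_ne k (by omega) (by omega)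
  | more n ih ih' =>
    rw [hX.recursion, ih' _ (by omega), ih' _ (by omega), ih _ (by omega), sub_self, mul_zero,
      add_zero]

theorem values_two (hX : IsSolution c α β γ X) :
    X (-2, 2) = c * β ∧ X (0, 2) = c * (γ - β) + α ∧ X (2, 2) = -(c * γ) := by
  refine ⟨?_, ?_, ?_⟩
  · rw [hX.recursion (-2) 0]
    norm_num [hX.neg_one_one, hX.eq_zero_of_outside_cone 1 (-3) (by omega),
      hX.zero_of_ne (-2) (by omega)]
  · rw [hX.recursion 0 0]
    norm_num [hX.neg_one_one, hX.one_one, hX.zero_zero]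
  · rw [hX.recursion 2 0]
    norm_num [hX.one_one, hX.eq_zero_of_outside_cone 1 3 (by omega), hX.zero_of_ne 2 (by omega)]

theorem values_three (hX : IsSolution c α β γ X) :
    X (-3, 3) = c ^ 2 * β ∧ X (-1, 3) = c ^ 2 * γ - 2 * c ^ 2 * β + c * α + β ∧
      X (1, 3) = -(2 * c ^ 2 * γ) + c ^ 2 * β - c * α + γ ∧ X (3, 3) = c ^ 2 * γ := by
  obtain ⟨hm2, h0, hp2⟩ := hX.values_two
  refine ⟨?_, ?_, ?_, ?_⟩
  · rw [hX.recursion (-3) 1]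
    norm_num [hm2, hX.eq_zero_of_outside_cone 2 (-4) (by omega),
      hX.eq_zero_of_outside_cone 1 (-3) (by omega)]
    ring
  · rw [hX.recursion (-1) 1]
    norm_num [hm2, h0, hX.neg_one_one]
    ring
  · rw [hX.recursion 1 1]
    norm_num [hp2, h0, hX.one_one]
    ring
  · rw [hX.recursion 3 1]
    norm_num [hp2, hX.eq_zero_of_outside_cone 2 4 (by omega),
      hX.eq_zero_of_outside_cone 1 3 (by omega)]
    ring

theorem moment_three {r : ℝ} (hX : IsSolution r α β γ X) :
    ((∑' k : ℤ, (k : ℝ) * ‖X (k, 3)‖ ^ 2 : ℝ) : ℂ) =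
      (6 * r ^ 4 - 4 * r ^ 2 + 1) * (‖γ‖ ^ 2 - ‖β‖ ^ 2) -
        r * (1 - r ^ 2) * (α * conj (β + γ) + conj α * (β + γ)) := by
  rw [tsum_int_mul_sq_norm_of_eq_zero (f := fun k => X (k, 3)) fun k _ _ _ _ => hX.eq_zero_of_outside_cone 3 k (by omega)]
  obtain ⟨hm3, hm1, hp1, hp3⟩ := hX.values_three
  push_cast
  simp only [← Complex.mul_conj', hm3, hm1, hp1, hp3, map_add, map_sub, map_mul, map_neg, map_pow,
    map_ofNat, Complex.conj_ofReal]
  ring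

end IsSolution

end RCA

theorem stmt7 (θ : ℝ) (α β γ : ℂ) (X : ℤ × ℕ → ℂ)
    (hrec : ∀ (k : ℤ) (n : ℕ),
      X (k, n + 2) = (Real.cos θ : ℂ) * (X (k + 1, n + 1) - X (k - 1, n + 1)) + X (k, n))
    (h00 : X (0, 0) = α) (hm1 : X (-1, 1) = β) (hp1 : X (1, 1) = γ)
    (h0 : ∀ k : ℤ, k ≠ 0 → X (k, 0) = 0)
    (h1 : ∀ k : ℤ, k ≠ -1 → k ≠ 1 → X (k, 1) = 0) :
    ((∑' k : ℤ, (k : ℝ) * ‖X (k, 3)‖ ^ 2 : ℝ) : ℂ) =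
      (1 / 2) * ((3 * Real.cos (2 * θ) ^ 2 + 2 * Real.cos (2 * θ) + 1 : ℝ) : ℂ) *
        ((‖γ‖ ^ 2 - ‖β‖ ^ 2 : ℝ) : ℂ) -
      (1 / 2) * ((Real.sin θ * Real.sin (2 * θ) : ℝ) : ℂ) *
        (α * (starRingEnd ℂ) (β + γ) + (starRingEnd ℂ) α * (β + γ)) := by
  have hX : RCA.IsSolution (Real.cos θ) α β γ X := ⟨hrec, h00, hm1, hp1, h0, h1⟩
  have hsin : Real.sin θ * Real.sin (2 * θ) = 2 * Real.cos θ * (1 - Real.cos θ ^ 2) := by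
    rw [Real.sin_two_mul, ← Real.sin_sq]
    ring
  rw [hX.moment_three, hsin, Real.cos_two_mul]
  push_cast
  ring
end

section
/- For the RCA with initial state (α, β, γ) satisfying β + γ = 0, the distribution is symmetric for all time: |X(k, n)| = |X(−k, n)| for all k ∈ ℤ, n ∈ ℕ. -/
theorem stmt8 (θ : ℝ) (α β γ : ℂ) (hβγ : β + γ = 0) (X : ℤ × ℕ → ℂ)
    (hrec : ∀ (k : ℤ) (n : ℕ),
      X (k, n + 2) = (Real.cos θ : ℂ) * (X (k + 1, n + 1) - X (k - 1, n + 1)) + X (k, n))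
    (h00 : X (0, 0) = α) (hm1 : X (-1, 1) = β) (hp1 : X (1, 1) = γ)
    (h0 : ∀ k : ℤ, k ≠ 0 → X (k, 0) = 0)
    (h1 : ∀ k : ℤ, k ≠ -1 → k ≠ 1 → X (k, 1) = 0) :
    ∀ (k : ℤ) (n : ℕ), ‖X (k, n)‖ = ‖X (-k, n)‖ := by
  have key : ∀ n : ℕ, (∀ k : ℤ, X (-k, n) = (-1:ℂ)^n * X (k, n)) ∧
      (∀ k : ℤ, X (-k, n+1) = (-1:ℂ)^(n+1) * X (k, n+1)) := by
    intro n
    induction n with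
    | zero =>
      constructor
      · intro k
        rcases eq_or_ne k 0 with rfl | hk
        · simp
        · rw [h0 k hk, h0 (-k) (neg_ne_zero.mpr hk)]; ring
      · intro k
        rcases eq_or_ne k 1 with rfl | hk1
        · simp only [pow_one, zero_add]
          rw [hm1, hp1]; linear_combination hβγ
        rcases eq_or_ne k (-1) with rfl | hkm1
        · simp only [pow_one, zero_add, neg_neg]
          rw [hm1, hp1]; linear_combination hβγ
        · rw [h1 k hkm1 hk1, h1 (-k) (by omega) (by omega)]; ring
    | succ n ih =>
      refine ⟨ih.2, ?_⟩
      intro k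
      have e1 : (-k:ℤ) + 1 = -(k-1) := by ring
      have e2 : (-k:ℤ) - 1 = -(k+1) := by ring
      rw [show n+1+1 = n+2 from rfl, hrec (-k) n, e1, e2, ih.2 (k-1), ih.2 (k+1),
        ih.1 k, hrec k n]
      ring
  intro k n
  rw [(key n).1 k]
  simp
end

section
/- For the RCA with initial state (α, β, γ) with α = 0 and |β| = |γ| > 0, the distribution is symmetric for all time: |X(k, n)| = |X(−k, n)| for all k ∈ ℤ, n ∈ ℕ. -/
/-!
With `α = 0` the conjugated mirror image `(k, n) ↦ c (-1)ⁿ conj X(-k, n)` of a solution is again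
a solution for any constant `c`, because `cos θ` is real. Since `|β| = |γ|`, some `c` with `|c| = 1`
makes it agree with `X` at times `0` and `1`, hence everywhere; so `|X(k, n)| = |X(-k, n)|`.
-/

open ComplexConjugate

def SatisfiesRCA {R : Type*} [Ring R] (a : R) (X : ℤ × ℕ → R) : Prop :=
  ∀ (k : ℤ) (n : ℕ), X (k, n + 2) = a * (X (k + 1, n + 1) - X (k - 1, n + 1)) + X (k, n)

namespace SatisfiesRCA

theorem eq_of_initial_eq {R : Type*} [Ring R] {a : R} {X Y : ℤ × ℕ → R}
    (hX : SatisfiesRCA a X) (hY : SatisfiesRCA a Y)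
    (h0 : ∀ k, X (k, 0) = Y (k, 0)) (h1 : ∀ k, X (k, 1) = Y (k, 1)) : X = Y := by
  suffices h : ∀ n k, X (k, n) = Y (k, n) from funext fun ⟨k, n⟩ => h n k
  intro n
  induction n using Nat.twoStepInduction with
  | zero => exact h0
  | one => exact h1
  | more n ih ih' => intro k; rw [hX, hY, ih, ih', ih']

theorem mirror_star {R : Type*} [CommRing R] [StarRing R] {a : R} (ha : star a = a)
    {X : ℤ × ℕ → R} (hX : SatisfiesRCA a X) (c : R) :
    SatisfiesRCA a (fun p => c * (-1) ^ p.2 * star (X (-p.1, p.2))) := by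
  intro k n
  have hk₁ : -(k + 1) = -k - 1 := by ring
  have hk₂ : -(k - 1) = -k + 1 := by ring
  simp only [hX (-k) n, hk₁, hk₂, star_add, star_mul', star_sub, ha]
  ring

end SatisfiesRCA

theorem Complex.exists_norm_eq_one_eq_neg_mul_conj {β γ : ℂ} (h : ‖β‖ = ‖γ‖) :
    ∃ c : ℂ, ‖c‖ = 1 ∧ γ = -c * conj β := by
  rcases eq_or_ne β 0 with rfl | hβ
  · exact ⟨1, norm_one, by simpa using h.symm⟩
  have hβ' : conj β ≠ 0 := by simpa using hβ
  refine ⟨-γ / conj β, ?_, by field_simp⟩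
  rw [norm_div, norm_neg, Complex.norm_conj, h, div_self (h ▸ norm_ne_zero_iff.mpr hβ)]

theorem stmt9_general (θ : ℝ) (β γ : ℂ) (hβγ : ‖β‖ = ‖γ‖) (X : ℤ × ℕ → ℂ)
    (hrec : ∀ (k : ℤ) (n : ℕ),
      X (k, n + 2) = (Real.cos θ : ℂ) * (X (k + 1, n + 1) - X (k - 1, n + 1)) + X (k, n))
    (h00 : X (0, 0) = 0) (hm1 : X (-1, 1) = β) (hp1 : X (1, 1) = γ)
    (h0 : ∀ k : ℤ, k ≠ 0 → X (k, 0) = 0)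
    (h1 : ∀ k : ℤ, k ≠ -1 → k ≠ 1 → X (k, 1) = 0) :
    ∀ (k : ℤ) (n : ℕ), ‖X (k, n)‖ = ‖X (-k, n)‖ := by
  obtain ⟨c, hc, hγ⟩ := Complex.exists_norm_eq_one_eq_neg_mul_conj hβγ
  have hβ : β = -c * conj γ := by
    have hcc : c * conj c = 1 := by simp [Complex.mul_conj', hc]
    rw [hγ, map_mul, map_neg, Complex.conj_conj]
    linear_combination (-β) * hcc
  have hX0 : ∀ k, X (k, 0) = 0 := fun k => by
    rcases eq_or_ne k 0 with rfl | hk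
    exacts [h00, h0 k hk]
  have hmirror : X = fun p => c * (-1) ^ p.2 * conj (X (-p.1, p.2)) := by
    refine SatisfiesRCA.eq_of_initial_eq hrec
      (SatisfiesRCA.mirror_star (Complex.conj_ofReal _) hrec c) (fun k => by simp [hX0]) fun k => ?_
    by_cases hk₁ : k = 1
    · subst hk₁; simp [hp1, hm1, hγ]
    by_cases hk₂ : k = -1
    · subst hk₂; simp [hp1, hm1, hβ]
    simp [h1 k hk₂ hk₁, h1 (-k) (by omega) (by omega)]
  intro k n
  rw [congrFun hmirror (k, n)]
  simp [hc]

theorem stmt9 (θ : ℝ) (β γ : ℂ) (hβγ : ‖β‖ = ‖γ‖) (hpos : 0 < ‖β‖) (X : ℤ × ℕ → ℂ)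
    (hrec : ∀ (k : ℤ) (n : ℕ),
      X (k, n + 2) = (Real.cos θ : ℂ) * (X (k + 1, n + 1) - X (k - 1, n + 1)) + X (k, n))
    (h00 : X (0, 0) = 0) (hm1 : X (-1, 1) = β) (hp1 : X (1, 1) = γ)
    (h0 : ∀ k : ℤ, k ≠ 0 → X (k, 0) = 0)
    (h1 : ∀ k : ℤ, k ≠ -1 → k ≠ 1 → X (k, 1) = 0) :
    ∀ (k : ℤ) (n : ℕ), ‖X (k, n)‖ = ‖X (-k, n)‖ :=
  stmt9_general θ β γ hβγ X hrec h00 hm1 hp1 h0 h1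
end

section
/- For the RCA with initial state (α, β, γ) where |β| = |γ| > 0, α ≠ 0, and arg β + arg γ − 2·arg α ≡ π (mod 2π), the distribution is symmetric for all time: |X(k, n)| = |X(−k, n)| for all k ∈ ℤ, n ∈ ℕ. -/
/-!
Since the coefficient `cos θ` is real, the transformation
`X ↦ ((k, n) ↦ (-1)^n μ conj (X (-k, n)))` maps solutions of the recurrence to solutions, for any
`μ`. With `μ = α / conj α`, of modulus one, the conditions `|β| = |γ|` and
`arg β + arg γ - 2 arg α ≡ π` say exactly that the initial data are fixed by it, so by
uniqueness of solutions the whole orbit is, and taking norms gives the symmetry.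
-/

open Complex ComplexConjugate

lemma conj_eq_norm_mul_exp_neg_arg_mul_I (z : ℂ) : conj z = ‖z‖ * exp (-(arg z * I)) := by
  nth_rw 1 [← norm_mul_exp_arg_mul_I z]
  rw [map_mul, ← exp_conj, map_mul, conj_ofReal, conj_ofReal, conj_I, mul_neg]

lemma exp_mul_I_eq_neg_one {x : ℝ} (h : ∃ m : ℤ, x = Real.pi + 2 * Real.pi * m) :
    exp (x * I) = -1 := by
  obtain ⟨m, rfl⟩ := h
  rw [show ((Real.pi + 2 * Real.pi * m : ℝ) : ℂ) * I = Real.pi * I + m * (2 * Real.pi * I) by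
    push_cast; ring, exp_add, exp_pi_mul_I, exp_int_mul_two_pi_mul_I, mul_one]

lemma mul_conj_eq_neg_mul_conj_of_arg {α β γ : ℂ} (hβγ : ‖β‖ = ‖γ‖)
    (harg : ∃ m : ℤ, arg β + arg γ - 2 * arg α = Real.pi + 2 * Real.pi * m) :
    γ * conj α = -(α * conj β) := by
  have hexp : exp (γ.arg * I - α.arg * I) = -exp (α.arg * I - β.arg * I) := by
    rw [show (γ.arg : ℂ) * I - α.arg * I
        = α.arg * I - β.arg * I + ((β.arg + γ.arg - 2 * α.arg : ℝ) : ℂ) * I by push_cast; ring,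
      exp_add, exp_mul_I_eq_neg_one harg, mul_neg_one]
  rw [conj_eq_norm_mul_exp_neg_arg_mul_I, conj_eq_norm_mul_exp_neg_arg_mul_I]
  conv_lhs => rw [← norm_mul_exp_arg_mul_I γ]
  conv_rhs => rw [← norm_mul_exp_arg_mul_I α]
  rw [sub_eq_add_neg, sub_eq_add_neg, exp_add, exp_add] at hexp
  rw [hβγ]
  linear_combination (‖γ‖ : ℂ) * ‖α‖ * hexp

def IsRCASolution (c : ℝ) (X : ℤ × ℕ → ℂ) : Prop :=
  ∀ (k : ℤ) (n : ℕ), X (k, n + 2) = (c : ℂ) * (X (k + 1, n + 1) - X (k - 1, n + 1)) + X (k, n)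

def conjReflect (μ : ℂ) (X : ℤ × ℕ → ℂ) : ℤ × ℕ → ℂ :=
  fun p => (-1) ^ p.2 * μ * conj (X (-p.1, p.2))

theorem isRCASolution_conjReflect {c : ℝ} {X : ℤ × ℕ → ℂ} (hX : IsRCASolution c X) (μ : ℂ) :
    IsRCASolution c (conjReflect μ X) := by
  intro k n
  simp only [conjReflect]
  rw [hX (-k) n, show -(k + 1) = -k - 1 by ring, show -(k - 1) = -k + 1 by ring]
  simp only [map_add, map_mul, map_sub, conj_ofReal]
  ring

namespace IsRCASolution

variable {c : ℝ} {X Y : ℤ × ℕ → ℂ}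

theorem eq_of_eq_at_times_zero_one (hX : IsRCASolution c X) (hY : IsRCASolution c Y)
    (h0 : ∀ k, X (k, 0) = Y (k, 0)) (h1 : ∀ k, X (k, 1) = Y (k, 1)) : X = Y := by
  have agree : ∀ n, (∀ k, X (k, n) = Y (k, n)) ∧ ∀ k, X (k, n + 1) = Y (k, n + 1) := by
    intro n
    induction n with
    | zero => exact ⟨h0, h1⟩
    | succ n ih => exact ⟨ih.2, fun k => by rw [hX, hY, ih.1, ih.2, ih.2]⟩
  funext ⟨k, n⟩
  exact (agree n).1 k

theorem norm_eq_norm_neg_of_initial {μ : ℂ} (hμ : ‖μ‖ = 1) (hX : IsRCASolution c X)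
    (h0 : ∀ k, X (k, 0) = μ * conj (X (-k, 0))) (h1 : ∀ k, X (k, 1) = -μ * conj (X (-k, 1)))
    (k : ℤ) (n : ℕ) : ‖X (k, n)‖ = ‖X (-k, n)‖ := by
  have hXY : X = conjReflect μ X :=
    hX.eq_of_eq_at_times_zero_one (isRCASolution_conjReflect hX μ)
      (by simpa [conjReflect] using h0) (by simpa [conjReflect] using h1)
  conv_lhs => rw [hXY]
  simp [conjReflect, hμ]

end IsRCASolution

theorem stmt10_general (θ : ℝ) (α β γ : ℂ) (hβγ : ‖β‖ = ‖γ‖) (hα : α ≠ 0)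
    (harg : ∃ m : ℤ, Complex.arg β + Complex.arg γ - 2 * Complex.arg α
      = Real.pi + 2 * Real.pi * m)
    (X : ℤ × ℕ → ℂ)
    (hrec : ∀ (k : ℤ) (n : ℕ),
      X (k, n + 2) = (Real.cos θ : ℂ) * (X (k + 1, n + 1) - X (k - 1, n + 1)) + X (k, n))
    (h00 : X (0, 0) = α) (hm1 : X (-1, 1) = β) (hp1 : X (1, 1) = γ)
    (h0 : ∀ k : ℤ, k ≠ 0 → X (k, 0) = 0)
    (h1 : ∀ k : ℤ, k ≠ -1 → k ≠ 1 → X (k, 1) = 0) :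
    ∀ (k : ℤ) (n : ℕ), ‖X (k, n)‖ = ‖X (-k, n)‖ := by
  have hconjα : conj α ≠ 0 := (map_ne_zero _).2 hα
  set μ := α / conj α
  have hμ : ‖μ‖ = 1 := by simp [μ, hα]
  have hγ : γ = -μ * conj β := by
    simp only [μ]
    field_simp
    linear_combination mul_conj_eq_neg_mul_conj_of_arg hβγ harg
  have hβ : β = -μ * conj γ := by
    have harg' : ∃ m : ℤ, arg γ + arg β - 2 * arg α = Real.pi + 2 * Real.pi * m := by
      simpa only [add_comm (arg β)] using harg
    simp only [μ]
    field_simp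
    linear_combination mul_conj_eq_neg_mul_conj_of_arg hβγ.symm harg'
  refine IsRCASolution.norm_eq_norm_neg_of_initial hμ hrec (fun k => ?_) (fun k => ?_)
  · rcases eq_or_ne k 0 with rfl | hk
    · rw [neg_zero, h00, div_mul_cancel₀ α hconjα]
    · rw [h0 k hk, h0 (-k) (neg_ne_zero.2 hk), map_zero, mul_zero]
  · by_cases hk1 : k = 1
    · rw [hk1, hp1, hm1, hγ]
    by_cases hkm1 : k = -1
    · rw [hkm1, hm1, neg_neg, hp1, hβ]
    rw [h1 k hkm1 hk1, h1 (-k) (by omega) (by omega), map_zero, mul_zero]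

theorem stmt10 (θ : ℝ) (α β γ : ℂ) (hβγ : ‖β‖ = ‖γ‖) (hpos : 0 < ‖β‖) (hα : α ≠ 0)
    (harg : ∃ m : ℤ, Complex.arg β + Complex.arg γ - 2 * Complex.arg α
      = Real.pi + 2 * Real.pi * m)
    (X : ℤ × ℕ → ℂ)
    (hrec : ∀ (k : ℤ) (n : ℕ),
      X (k, n + 2) = (Real.cos θ : ℂ) * (X (k + 1, n + 1) - X (k - 1, n + 1)) + X (k, n))
    (h00 : X (0, 0) = α) (hm1 : X (-1, 1) = β) (hp1 : X (1, 1) = γ)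
    (h0 : ∀ k : ℤ, k ≠ 0 → X (k, 0) = 0)
    (h1 : ∀ k : ℤ, k ≠ -1 → k ≠ 1 → X (k, 1) = 0) :
    ∀ (k : ℤ) (n : ℕ), ‖X (k, n)‖ = ‖X (-k, n)‖ :=
  stmt10_general θ α β γ hβγ hα harg X hrec h00 hm1 hp1 h0 h1
end

section
/- For the RCA with initial state (α, β, γ), ‖X(3)‖² = 2cos²θ·|α|² + (2cos⁴θ + (1−2cos²θ)²)(|β|²+|γ|²) + 2cos²θ(1−2cos²θ)(β·conj(γ)+conj(β)·γ) + cos θ(1−3cos²θ)(α(conj(β)−conj(γ)) + conj(α)(β−γ)). -/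
/-!
The automaton propagates at speed one, so `X (·, 2)` lives on `{-2, 0, 2}` and `X (·, 3)` on
`{-3, -1, 1, 3}`. Running the recurrence twice gives these four values as linear forms in
`α, β, γ` with coefficients polynomial in `c = cos θ`; the norm is then the finite sum of
`z * conj z` over them, a polynomial identity once `conj c = c`.
-/

open ComplexConjugate

def IsRCA (c : ℂ) (X : ℤ × ℕ → ℂ) : Prop :=
  ∀ (k : ℤ) (n : ℕ), X (k, n + 2) = c * (X (k + 1, n + 1) - X (k - 1, n + 1)) + X (k, n)

structure IsInitialState (X : ℤ × ℕ → ℂ) (α β γ : ℂ) : Prop where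
  zero_zero : X (0, 0) = α
  neg_one_one : X (-1, 1) = β
  one_one : X (1, 1) = γ
  eq_zero_of_time_zero : ∀ k : ℤ, k ≠ 0 → X (k, 0) = 0
  eq_zero_of_time_one : ∀ k : ℤ, k ≠ -1 → k ≠ 1 → X (k, 1) = 0

namespace IsRCA

variable {c α β γ : ℂ} {X : ℤ × ℕ → ℂ}

theorem eq_zero (hX : IsRCA c X) {k : ℤ} {n : ℕ} (hr : X (k + 1, n + 1) = 0)
    (hl : X (k - 1, n + 1) = 0) (h : X (k, n) = 0) : X (k, n + 2) = 0 := by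
  rw [hX, hr, hl, h]; ring

theorem time_two_eq_zero (hX : IsRCA c X) (hI : IsInitialState X α β γ) {k : ℤ}
    (h₁ : k ≠ -2) (h₂ : k ≠ 0) (h₃ : k ≠ 2) : X (k, 2) = 0 :=
  hX.eq_zero (hI.eq_zero_of_time_one _ (by omega) (by omega))
    (hI.eq_zero_of_time_one _ (by omega) (by omega)) (hI.eq_zero_of_time_zero k h₂)

theorem time_two_neg_two (hX : IsRCA c X) (hI : IsInitialState X α β γ) :
    X (-2, 2) = c * β := by
  have := hX (-2) 0
  norm_num [hI.neg_one_one, hI.eq_zero_of_time_one, hI.eq_zero_of_time_zero] at this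
  exact this

theorem time_two_zero (hX : IsRCA c X) (hI : IsInitialState X α β γ) :
    X (0, 2) = c * (γ - β) + α := by
  have := hX 0 0
  norm_num [hI.neg_one_one, hI.one_one, hI.zero_zero] at this
  exact this

theorem time_two_two (hX : IsRCA c X) (hI : IsInitialState X α β γ) :
    X (2, 2) = -(c * γ) := by
  have := hX 2 0
  norm_num [hI.one_one, hI.eq_zero_of_time_one, hI.eq_zero_of_time_zero] at this
  exact this

theorem time_three_eq_zero (hX : IsRCA c X) (hI : IsInitialState X α β γ) {k : ℤ}
    (hk : k ∉ ({-3, -1, 1, 3} : Finset ℤ)) : X (k, 3) = 0 := by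
  simp only [Finset.mem_insert, Finset.mem_singleton, not_or] at hk
  exact hX.eq_zero (hX.time_two_eq_zero hI (by omega) (by omega) (by omega))
    (hX.time_two_eq_zero hI (by omega) (by omega) (by omega))
    (hI.eq_zero_of_time_one k (by omega) (by omega))

theorem time_three_neg_three (hX : IsRCA c X) (hI : IsInitialState X α β γ) :
    X (-3, 3) = c ^ 2 * β := by
  have := hX (-3) 1
  norm_num [hX.time_two_neg_two hI, hX.time_two_eq_zero hI, hI.eq_zero_of_time_one] at this
  linear_combination this

theorem time_three_neg_one (hX : IsRCA c X) (hI : IsInitialState X α β γ) :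
    X (-1, 3) = c * α + (1 - 2 * c ^ 2) * β + c ^ 2 * γ := by
  have := hX (-1) 1
  norm_num [hX.time_two_zero hI, hX.time_two_neg_two hI, hI.neg_one_one] at this
  linear_combination this

theorem time_three_one (hX : IsRCA c X) (hI : IsInitialState X α β γ) :
    X (1, 3) = -(c * α) + c ^ 2 * β + (1 - 2 * c ^ 2) * γ := by
  have := hX 1 1
  norm_num [hX.time_two_zero hI, hX.time_two_two hI, hI.one_one] at this
  linear_combination this

theorem time_three_three (hX : IsRCA c X) (hI : IsInitialState X α β γ) :
    X (3, 3) = c ^ 2 * γ := by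
  have := hX 3 1
  norm_num [hX.time_two_two hI, hX.time_two_eq_zero hI, hI.eq_zero_of_time_one] at this
  linear_combination this

theorem tsum_norm_sq_time_three (hX : IsRCA c X) (hI : IsInitialState X α β γ) :
    ∑' k : ℤ, ‖X (k, 3)‖ ^ 2 =
      ‖c ^ 2 * β‖ ^ 2 + ‖c * α + (1 - 2 * c ^ 2) * β + c ^ 2 * γ‖ ^ 2 +
        ‖-(c * α) + c ^ 2 * β + (1 - 2 * c ^ 2) * γ‖ ^ 2 + ‖c ^ 2 * γ‖ ^ 2 := by
  rw [tsum_eq_sum (s := {-3, -1, 1, 3}) fun k hk => by simp [hX.time_three_eq_zero hI hk]]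
  simp [Finset.sum_insert, hX.time_three_neg_three hI, hX.time_three_neg_one hI,
    hX.time_three_one hI, hX.time_three_three hI, add_assoc]

theorem ofReal_tsum_norm_sq_time_three {c : ℝ} (hX : IsRCA c X) (hI : IsInitialState X α β γ) :
    ((∑' k : ℤ, ‖X (k, 3)‖ ^ 2 : ℝ) : ℂ) =
      2 * ((c ^ 2 : ℝ) : ℂ) * ((‖α‖ ^ 2 : ℝ) : ℂ) +
      ((2 * c ^ 4 + (1 - 2 * c ^ 2) ^ 2 : ℝ) : ℂ) * ((‖β‖ ^ 2 + ‖γ‖ ^ 2 : ℝ) : ℂ) +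
      ((2 * c ^ 2 * (1 - 2 * c ^ 2) : ℝ) : ℂ) * (β * conj γ + conj β * γ) +
      ((c * (1 - 3 * c ^ 2) : ℝ) : ℂ) * (α * (conj β - conj γ) + conj α * (β - γ)) := by
  rw [hX.tsum_norm_sq_time_three hI]
  push_cast [← Complex.mul_conj']
  simp only [map_add, map_sub, map_mul, map_pow, map_one, map_ofNat, map_neg, Complex.conj_ofReal]
  ring

end IsRCA

theorem stmt13 (θ : ℝ) (α β γ : ℂ) (X : ℤ × ℕ → ℂ)
    (hrec : ∀ (k : ℤ) (n : ℕ),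
      X (k, n + 2) = (Real.cos θ : ℂ) * (X (k + 1, n + 1) - X (k - 1, n + 1)) + X (k, n))
    (h00 : X (0, 0) = α) (hm1 : X (-1, 1) = β) (hp1 : X (1, 1) = γ)
    (h0 : ∀ k : ℤ, k ≠ 0 → X (k, 0) = 0)
    (h1 : ∀ k : ℤ, k ≠ -1 → k ≠ 1 → X (k, 1) = 0) :
    ((∑' k : ℤ, ‖X (k, 3)‖ ^ 2 : ℝ) : ℂ) =
      2 * ((Real.cos θ ^ 2 : ℝ) : ℂ) * ((‖α‖ ^ 2 : ℝ) : ℂ) +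
      ((2 * Real.cos θ ^ 4 + (1 - 2 * Real.cos θ ^ 2) ^ 2 : ℝ) : ℂ) *
        ((‖β‖ ^ 2 + ‖γ‖ ^ 2 : ℝ) : ℂ) +
      ((2 * Real.cos θ ^ 2 * (1 - 2 * Real.cos θ ^ 2) : ℝ) : ℂ) *
        (β * (starRingEnd ℂ) γ + (starRingEnd ℂ) β * γ) +
      ((Real.cos θ * (1 - 3 * Real.cos θ ^ 2) : ℝ) : ℂ) *
        (α * ((starRingEnd ℂ) β - (starRingEnd ℂ) γ) + (starRingEnd ℂ) α * (β - γ)) := by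
  exact IsRCA.ofReal_tsum_norm_sq_time_three hrec ⟨h00, hm1, hp1, h0, h1⟩
end

section
/- (Theorem 3) For θ ∈ (0, π/2) and c > 0, the squared norm ‖X(n)‖² = ∑_k |X(k,n)|² is equal to c for all n ∈ ℕ if and only if the initial state (α, β, γ) satisfies: |α|² = c, |β|² + |γ|² = c, β·conj(γ) + conj(β)·γ = 0, and α(conj(β) − conj(γ)) + conj(α)(β − γ) = 2c·cos θ. -/
/-!
Put `a = cos θ` and `u n = X(·, n)`, a finitely supported sequence. The real parts of the
correlations `∑ₖ f (k + j) * conj (g k)` of consecutive states obey a closed linear recursion: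
the real autocorrelation of `u (n + 2)`, and the odd part of the real cross-correlation of
`u (n + 1)` and `u (n + 2)`, are determined by the same data of the pair `(u n, u (n + 1))`.
The data `c δ₀`, `c δ₀`, `a c (δ₋₁ - δ₁)` form a fixed point of this recursion, and the four
conditions on `(α, β, γ)` say precisely that the initial pair sits at it; since `‖u n‖²` is the
autocorrelation at `0`, the norm then stays `c`. Conversely, conservation of the norm up to
time `3` already forces the four conditions, because `0 < a < 1`.
-/

open ComplexConjugate Function

noncomputable section

namespace Leapfrog

def corr (f g : ℤ → ℂ) (j : ℤ) : ℂ := ∑' k, f (k + j) * conj (g k)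

def step (a : ℝ) (v u : ℤ → ℂ) : ℤ → ℂ := fun k => a * (v (k + 1) - v (k - 1)) + u k

def autoRe (u : ℤ → ℂ) (j : ℤ) : ℝ := (corr u u j).re

def crossRe (u v : ℤ → ℂ) (j : ℤ) : ℝ := (corr v u j).re - (corr v u (-j)).re

lemma mul_conj_add_conj_mul (z w : ℂ) :
    z * conj w + conj z * w = ((2 * (z * conj w).re : ℝ) : ℂ) := by
  rw [← Complex.add_conj, map_mul, Complex.conj_conj]

section Step

variable {a c : ℝ} {u v g : ℤ → ℂ}

lemma hasFiniteSupport_step (hu : u.HasFiniteSupport) (hv : v.HasFiniteSupport) :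
    (step a v u).HasFiniteSupport :=
  (((hv.fun_comp_of_injective (add_left_injective 1)).fun_sub
    (hv.fun_comp_of_injective (sub_left_injective (b := 1)))).fun_mul_right _).fun_add hu

lemma summable_mul_conj (hg : g.HasFiniteSupport) (f : ℤ → ℂ) :
    Summable fun k => f k * conj (g k) :=
  summable_of_hasFiniteSupport ((hg.fun_comp (map_zero conj)).fun_mul_right f)

lemma conj_corr (f g : ℤ → ℂ) (j : ℤ) : conj (corr f g j) = corr g f (-j) := by
  rw [corr, starRingEnd_apply, tsum_star, ← (Equiv.subRight j).tsum_eq]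
  simp [corr, mul_comm, sub_eq_add_neg]

lemma corr_step_left (hg : g.HasFiniteSupport) (j : ℤ) :
    corr (step a v u) g j = a * (corr v g (j + 1) - corr v g (j - 1)) + corr u g j := by
  have hs := summable_mul_conj hg
  rw [corr, corr, corr, corr, ← (hs _).tsum_sub (hs _), ← tsum_mul_left,
    ← (((hs _).sub (hs _)).mul_left _).tsum_add (hs _)]
  refine tsum_congr fun k => ?_
  simp only [step, add_assoc, add_sub_assoc]
  ring

lemma corr_step_right (hg : g.HasFiniteSupport) (j : ℤ) :
    corr g (step a v u) j = a * (corr g v (j - 1) - corr g v (j + 1)) + corr g u j := by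
  rw [← neg_neg j, ← conj_corr, corr_step_left hg]
  simp only [map_add, map_mul, map_sub, Complex.conj_ofReal, conj_corr, neg_neg]
  ring_nf

lemma re_corr_comm (f g : ℤ → ℂ) (j : ℤ) : (corr f g j).re = (corr g f (-j)).re := by
  rw [← conj_corr, Complex.conj_re]

lemma autoRe_neg (u : ℤ → ℂ) (j : ℤ) : autoRe u (-j) = autoRe u j := by
  rw [autoRe, autoRe, re_corr_comm, neg_neg]

lemma crossRe_neg (u v : ℤ → ℂ) (j : ℤ) : crossRe u v (-j) = -crossRe u v j := by
  rw [crossRe, crossRe, neg_neg, neg_sub]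

lemma autoRe_zero (u : ℤ → ℂ) : autoRe u 0 = ∑' k, ‖u k‖ ^ 2 := by
  rw [autoRe, corr, ← Complex.ofReal_re (∑' k, ‖u k‖ ^ 2), Complex.ofReal_tsum]
  simp [Complex.mul_conj, Complex.normSq_eq_norm_sq]

lemma autoRe_step (hu : u.HasFiniteSupport) (hv : v.HasFiniteSupport) (j : ℤ) :
    autoRe (step a v u) j = a ^ 2 * (2 * autoRe v j - autoRe v (j + 2) - autoRe v (j - 2))
      + a * (crossRe u v (j + 1) - crossRe u v (j - 1)) + autoRe u j := by
  simp only [autoRe, crossRe, corr_step_left (hasFiniteSupport_step hu hv), corr_step_right hv,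
    corr_step_right hu, Complex.add_re, Complex.sub_re, Complex.re_ofReal_mul, re_corr_comm u v]
  ring_nf

lemma crossRe_step (hv : v.HasFiniteSupport) (j : ℤ) :
    crossRe v (step a v u) j = 2 * a * (autoRe v (j + 1) - autoRe v (j - 1)) - crossRe u v j := by
  simp only [autoRe, crossRe, corr_step_left hv, Complex.add_re, Complex.sub_re,
    Complex.re_ofReal_mul, re_corr_comm u v]
  rw [← autoRe, ← autoRe, ← autoRe, ← autoRe, ← autoRe_neg v (-j + 1), ← autoRe_neg v (-j - 1)]
  ring_nf

lemma autoRe_step_zero (hu : u.HasFiniteSupport) (hv : v.HasFiniteSupport) :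
    autoRe (step a v u) 0 = 2 * a ^ 2 * (autoRe v 0 - autoRe v 2) + 2 * a * crossRe u v 1
      + autoRe u 0 := by
  rw [autoRe_step hu hv, zero_sub, autoRe_neg, zero_sub, crossRe_neg, zero_add, zero_add]
  ring

structure IsConservedPair (a c : ℝ) (u v : ℤ → ℂ) : Prop where
  autoRe_fst : autoRe u = Pi.single 0 c
  autoRe_snd : autoRe v = Pi.single 0 c
  crossRe_eq : crossRe u v = Pi.single (-1) (a * c) - Pi.single 1 (a * c)

lemma IsConservedPair.step (hu : u.HasFiniteSupport) (hv : v.HasFiniteSupport)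
    (h : IsConservedPair a c u v) : IsConservedPair a c v (step a v u) where
  autoRe_fst := h.autoRe_snd
  autoRe_snd := funext fun j => by
    simp only [autoRe_step hu hv, h.autoRe_fst, h.autoRe_snd, h.crossRe_eq, Pi.sub_apply,
      Pi.single_apply]
    split_ifs <;> first | omega | ring
  crossRe_eq := funext fun j => by
    simp only [crossRe_step hv, h.autoRe_snd, h.crossRe_eq, Pi.sub_apply, Pi.single_apply]
    split_ifs <;> first | omega | ring

end Step

lemma corr_single_right (f : ℤ → ℂ) (i : ℤ) (z : ℂ) (j : ℤ) :
    corr f (Pi.single i z) j = f (i + j) * conj z := by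
  rw [corr, tsum_eq_single i fun k hk => by simp [hk], Pi.single_eq_same]

lemma corr_add_right (f : ℤ → ℂ) {g h : ℤ → ℂ} (hg : g.HasFiniteSupport)
    (hh : h.HasFiniteSupport) (j : ℤ) : corr f (g + h) j = corr f g j + corr f h j := by
  simp only [corr, Pi.add_apply, map_add, mul_add]
  exact (summable_mul_conj hg _).tsum_add (summable_mul_conj hh _)

lemma hasFiniteSupport_single (i : ℤ) (z : ℂ) : (Pi.single i z : ℤ → ℂ).HasFiniteSupport :=
  (Set.finite_singleton i).subset Pi.support_single_subset

section InitialData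

variable (α β γ : ℂ)

lemma autoRe_single_zero : autoRe (Pi.single 0 α) = Pi.single 0 (‖α‖ ^ 2) := by
  ext j
  rw [autoRe, corr_single_right, zero_add]
  by_cases hj : j = 0
  · simp [hj, Complex.mul_conj, Complex.normSq_eq_norm_sq, -Complex.ofReal_pow]
  · simp [hj]

lemma autoRe_pair :
    autoRe (Pi.single (-1) β + Pi.single 1 γ) = Pi.single 0 (‖β‖ ^ 2 + ‖γ‖ ^ 2)
      + Pi.single 2 (β * conj γ).re + Pi.single (-2) (β * conj γ).re := by
  ext j
  rw [autoRe, corr_add_right _ (hasFiniteSupport_single _ _) (hasFiniteSupport_single _ _)]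
  simp only [corr_single_right, Pi.add_apply, Pi.single_apply]
  split_ifs <;> first | omega |
    (simp [Complex.mul_conj, Complex.normSq_eq_norm_sq, Complex.mul_re, -Complex.ofReal_pow] <;> ring)

lemma crossRe_single_pair :
    crossRe (Pi.single 0 α) (Pi.single (-1) β + Pi.single 1 γ)
      = Pi.single (-1) (α * conj (β - γ)).re - Pi.single 1 (α * conj (β - γ)).re := by
  ext j
  simp only [crossRe, corr_single_right, Pi.add_apply, Pi.sub_apply, Pi.single_apply]
  split_ifs <;> first | omega | (simp [Complex.mul_re] <;> ring)

end InitialData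

section Orbit

variable {a c : ℝ} {u : ℕ → ℤ → ℂ}

lemma hasFiniteSupport_orbit_of_initial {α β γ : ℂ}
    (hstep : ∀ n, u (n + 2) = step a (u (n + 1)) (u n)) (hu₀ : u 0 = Pi.single 0 α)
    (hu₁ : u 1 = Pi.single (-1) β + Pi.single 1 γ) (n : ℕ) : (u n).HasFiniteSupport := by
  suffices ∀ n, (u n).HasFiniteSupport ∧ (u (n + 1)).HasFiniteSupport from (this n).1
  intro n
  induction n with
  | zero =>
    exact ⟨hu₀ ▸ hasFiniteSupport_single _ _,
      hu₁ ▸ (hasFiniteSupport_single _ _).add (hasFiniteSupport_single _ _)⟩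
  | succ n ih => exact ⟨ih.2, hstep n ▸ hasFiniteSupport_step ih.1 ih.2⟩

lemma isConservedPair_orbit (hstep : ∀ n, u (n + 2) = step a (u (n + 1)) (u n))
    (hfin : ∀ n, (u n).HasFiniteSupport) (h : IsConservedPair a c (u 0) (u 1)) :
    ∀ n, IsConservedPair a c (u n) (u (n + 1))
  | 0 => h
  | n + 1 => hstep n ▸ (isConservedPair_orbit hstep hfin h n).step (hfin n) (hfin (n + 1))

lemma initial_data_of_autoRe_orbit {α β γ : ℂ} (ha₀ : 0 < a) (ha₁ : a < 1)
    (hstep : ∀ n, u (n + 2) = step a (u (n + 1)) (u n)) (hu₀ : u 0 = Pi.single 0 α)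
    (hu₁ : u 1 = Pi.single (-1) β + Pi.single 1 γ) (h : ∀ n, autoRe (u n) 0 = c) :
    ‖α‖ ^ 2 = c ∧ ‖β‖ ^ 2 + ‖γ‖ ^ 2 = c ∧ (β * conj γ).re = 0 ∧
      (α * conj (β - γ)).re = a * c := by
  have hfin := hasFiniteSupport_orbit_of_initial hstep hu₀ hu₁
  have hu₂ : u 2 = step a (u 1) (u 0) := hstep 0
  have N0 := h 0
  have N1 := h 1
  have N2 := h 2
  have N3 := h 3
  rw [hu₂, autoRe_step_zero (hfin 0) (hfin 1)] at N2
  rw [show u 3 = step a (u 2) (u 1) from hstep 1, autoRe_step_zero (hfin 1) (hfin 2), h 2, h 1,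
    hu₂, crossRe_step (hfin 1), autoRe_step (hfin 0) (hfin 1) 2] at N3
  simp only [hu₀, hu₁, autoRe_single_zero, autoRe_pair, crossRe_single_pair, Pi.add_apply,
    Pi.sub_apply, Pi.single_apply] at N0 N1 N2 N3
  set ρ := (β * conj γ).re
  set s := (α * conj (β - γ)).re
  norm_num at N0 N1 N2 N3
  -- Time 2 fixes `s` in terms of `ρ`; time 3 then leaves `2 a² (1 - a²) ρ = 0`.
  have hs : s = a * (c - ρ) :=
    mul_left_cancel₀ ha₀.ne' (by linear_combination (-1 / 2) * N2 + a ^ 2 * N1 + (1 / 2) * N0)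
  have hρ : ρ = 0 := by
    have hpos : 0 < 2 * a ^ 2 * (1 - a ^ 2) := mul_pos (by positivity) (by nlinarith)
    refine (mul_eq_zero.mp (?_ : 2 * a ^ 2 * (1 - a ^ 2) * ρ = 0)).resolve_left hpos.ne'
    linear_combination N3 - (2 * a - 2 * a ^ 3) * hs - (2 * a ^ 4 - 4 * a ^ 2) * N1
  exact ⟨N0, N1, hρ, by rw [hs, hρ, sub_zero]⟩

lemma autoRe_orbit_of_initial_data {α β γ : ℂ}
    (hstep : ∀ n, u (n + 2) = step a (u (n + 1)) (u n)) (hu₀ : u 0 = Pi.single 0 α)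
    (hu₁ : u 1 = Pi.single (-1) β + Pi.single 1 γ) (hα : ‖α‖ ^ 2 = c)
    (hβγ : ‖β‖ ^ 2 + ‖γ‖ ^ 2 = c) (hρ : (β * conj γ).re = 0)
    (hs : (α * conj (β - γ)).re = a * c) (n : ℕ) : autoRe (u n) 0 = c := by
  have h₀ : IsConservedPair a c (u 0) (u 1) :=
    ⟨by rw [hu₀, autoRe_single_zero, hα], by simp [hu₁, autoRe_pair, hβγ, hρ],
      by rw [hu₀, hu₁, crossRe_single_pair, hs]⟩
  have hfin := hasFiniteSupport_orbit_of_initial hstep hu₀ hu₁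
  rw [(isConservedPair_orbit hstep hfin h₀ n).autoRe_fst, Pi.single_eq_same]

end Orbit

end Leapfrog

end

open Leapfrog

theorem stmt14_general (θ : ℝ) (hθ : θ ∈ Set.Ioo 0 (Real.pi / 2)) (c : ℝ)
    (α β γ : ℂ) (X : ℤ × ℕ → ℂ)
    (hrec : ∀ (k : ℤ) (n : ℕ),
      X (k, n + 2) = (Real.cos θ : ℂ) * (X (k + 1, n + 1) - X (k - 1, n + 1)) + X (k, n))
    (h00 : X (0, 0) = α) (hm1 : X (-1, 1) = β) (hp1 : X (1, 1) = γ)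
    (h0 : ∀ k : ℤ, k ≠ 0 → X (k, 0) = 0)
    (h1 : ∀ k : ℤ, k ≠ -1 → k ≠ 1 → X (k, 1) = 0) :
    (∀ n : ℕ, ∑' k : ℤ, ‖X (k, n)‖ ^ 2 = c) ↔
      (‖α‖ ^ 2 = c ∧ ‖β‖ ^ 2 + ‖γ‖ ^ 2 = c ∧
        β * (starRingEnd ℂ) γ + (starRingEnd ℂ) β * γ = 0 ∧
        α * ((starRingEnd ℂ) β - (starRingEnd ℂ) γ) + (starRingEnd ℂ) α * (β - γ)
          = ((2 * c * Real.cos θ : ℝ) : ℂ)) := by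
  have ha₀ : 0 < Real.cos θ :=
    Real.cos_pos_of_mem_Ioo ⟨by linarith [hθ.1, Real.pi_pos], hθ.2⟩
  have ha₁ : Real.cos θ < 1 := by
    simpa using Real.cos_lt_cos_of_nonneg_of_le_pi le_rfl (by linarith [hθ.2, Real.pi_pos]) hθ.1
  have hu₀ : (fun k => X (k, 0)) = Pi.single 0 α := by
    ext k
    by_cases hk : k = 0 <;> simp_all
  have hu₁ : (fun k => X (k, 1)) = Pi.single (-1) β + Pi.single 1 γ := by
    ext k
    by_cases hk : k = -1
    · simp_all
    by_cases hk' : k = 1 <;> simp_all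
  have hstep : ∀ n, (fun k => X (k, n + 2))
      = step (Real.cos θ) (fun k => X (k, n + 1)) (fun k => X (k, n)) :=
    fun n => funext fun k => hrec k n
  simp_rw [← autoRe_zero]
  rw [← map_sub, mul_conj_add_conj_mul, mul_conj_add_conj_mul, Complex.ofReal_eq_zero,
    Complex.ofReal_inj, mul_eq_zero, or_iff_right two_ne_zero, mul_assoc,
    mul_right_inj' two_ne_zero, mul_comm c]
  exact ⟨initial_data_of_autoRe_orbit (u := fun n k => X (k, n)) ha₀ ha₁ hstep hu₀ hu₁,
    fun ⟨hα, hβγ, hρ, hs⟩ => autoRe_orbit_of_initial_data (u := fun n k => X (k, n))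
      hstep hu₀ hu₁ hα hβγ hρ hs⟩

theorem stmt14 (θ : ℝ) (hθ : θ ∈ Set.Ioo 0 (Real.pi / 2)) (c : ℝ) (hc : 0 < c)
    (α β γ : ℂ) (X : ℤ × ℕ → ℂ)
    (hrec : ∀ (k : ℤ) (n : ℕ),
      X (k, n + 2) = (Real.cos θ : ℂ) * (X (k + 1, n + 1) - X (k - 1, n + 1)) + X (k, n))
    (h00 : X (0, 0) = α) (hm1 : X (-1, 1) = β) (hp1 : X (1, 1) = γ)
    (h0 : ∀ k : ℤ, k ≠ 0 → X (k, 0) = 0)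
    (h1 : ∀ k : ℤ, k ≠ -1 → k ≠ 1 → X (k, 1) = 0) :
    (∀ n : ℕ, ∑' k : ℤ, ‖X (k, n)‖ ^ 2 = c) ↔
      (‖α‖ ^ 2 = c ∧ ‖β‖ ^ 2 + ‖γ‖ ^ 2 = c ∧
        β * (starRingEnd ℂ) γ + (starRingEnd ℂ) β * γ = 0 ∧
        α * ((starRingEnd ℂ) β - (starRingEnd ℂ) γ) + (starRingEnd ℂ) α * (β - γ)
          = ((2 * c * Real.cos θ : ℝ) : ℂ)) :=
  stmt14_general θ hθ c α β γ X hrec h00 hm1 hp1 h0 h1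
end

section
/- (Corollary 4) For any c > 0 and θ ∈ (0, π/2), no initial state (α, β, γ) of the RCA simultaneously satisfies the symmetry conditions (β + γ = 0, or |β| = |γ| > 0 with α = 0, or |β| = |γ| > 0, α ≠ 0, arg β + arg γ − 2 arg α ≡ π mod 2π) and the conservation conditions (|α|² = c, |β|²+|γ|² = c, β·conj(γ)+conj(β)·γ = 0, α(conj(β)−conj(γ))+conj(α)(β−γ) = 2c cos θ). -/
/-!
If `β + γ = 0`, the orthogonality law forces `β = γ = 0`, and if `α = 0` then `c = ‖α‖² = 0`.
In the remaining case the argument condition says exactly that `u := conj α * β` and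
`conj α * γ` are opposite conjugates. The two remaining conservation laws then become
`Re (u²) = 0` and `2 Re u = c cos θ`, while `|u|² = c²/2`. Since `Re (u²) = 0` means
`|u|² = 2 (Re u)²`, this forces `cos² θ = 1`, which is impossible for `0 < θ < π/2`.
-/

open Complex ComplexConjugate

namespace Complex

theorem exp_pi_add_two_pi_int_mul_I (m : ℤ) :
    exp (↑(Real.pi + 2 * Real.pi * m) * I) = -1 := by
  rw [show (↑(Real.pi + 2 * Real.pi * m) * I : ℂ) = Real.pi * I + m * (2 * Real.pi * I) by
      push_cast; ring,
    exp_add, exp_pi_mul_I, exp_int_mul_two_pi_mul_I, mul_one]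

theorem conj_sq_mul_mul_eq_norm_mul_exp_arg (α β γ : ℂ) :
    conj α ^ 2 * (β * γ) =
      ↑(‖α‖ ^ 2 * ‖β‖ * ‖γ‖) * exp (↑(arg β + arg γ - 2 * arg α) * I) := by
  have hconj : conj α = ‖α‖ * exp (↑(-arg α) * I) := by
    conv_lhs => rw [← norm_mul_exp_arg_mul_I α]
    rw [map_mul, conj_ofReal, ← exp_conj, map_mul, conj_ofReal, conj_I]
    push_cast; ring_nf
  conv_lhs => rw [hconj, ← norm_mul_exp_arg_mul_I β, ← norm_mul_exp_arg_mul_I γ]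
  rw [show (↑(arg β + arg γ - 2 * arg α) * I : ℂ)
      = ↑(-arg α) * I + ↑(-arg α) * I + (arg β * I + arg γ * I) by push_cast; ring,
    exp_add, exp_add, exp_add]
  push_cast; ring

theorem eq_neg_conj_of_mul_eq_neg_norm_mul {u v : ℂ} (h : u * v = -(‖u‖ * ‖v‖ : ℝ))
    (hnorm : ‖u‖ = ‖v‖) : v = -conj u := by
  rcases eq_or_ne u 0 with rfl | hu
  · simpa using hnorm.symm
  · apply mul_left_cancel₀ hu
    rw [h, ← hnorm, mul_neg, mul_conj, normSq_eq_norm_sq]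
    push_cast; ring

theorem normSq_eq_two_mul_re_sq_of_re_sq_eq_zero {u : ℂ} (h : (u ^ 2).re = 0) :
    normSq u = 2 * u.re ^ 2 := by
  rw [sq, mul_re] at h
  rw [normSq_apply]
  linarith

end Complex

theorem cos_sq_eq_one_of_conj_mul_eq_neg_conj {α β γ : ℂ} {c θ : ℝ} (hc : c ≠ 0)
    (hα : ‖α‖ ^ 2 = c) (hβ : ‖β‖ ^ 2 = c / 2) (hγ : conj α * γ = -conj (conj α * β))
    (horth : β * conj γ + conj β * γ = 0)
    (hcurrent : α * (conj β - conj γ) + conj α * (β - γ) = ↑(2 * c * Real.cos θ)) :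
    Real.cos θ ^ 2 = 1 := by
  have hγ' : α * conj γ = -(conj α * β) := by simpa using congrArg conj hγ
  simp only [map_mul, conj_conj] at hγ
  have hsq : ((conj α * β) ^ 2).re = 0 := by
    have h : (conj α * β) ^ 2 + conj ((conj α * β) ^ 2) = 0 := by
      simp only [map_pow, map_mul, conj_conj]
      linear_combination (-(α * conj α)) * horth + (conj α * β) * hγ' + (α * conj β) * hγ
    rw [add_conj] at h
    simpa using h
  have hre : (conj α * β).re = c * Real.cos θ / 2 := by
    have h : conj α * β + conj (conj α * β) = ↑(c * Real.cos θ) := by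
      simp only [map_mul, conj_conj]
      push_cast at hcurrent ⊢
      linear_combination hcurrent / 2 + hγ' / 2 + hγ / 2
    rw [add_conj, ofReal_inj] at h
    linarith
  have hnormSq : normSq (conj α * β) = c * (c / 2) := by
    rw [normSq_eq_norm_sq, norm_mul, norm_conj, mul_pow, hα, hβ]
  have hnorm := normSq_eq_two_mul_re_sq_of_re_sq_eq_zero hsq
  rw [hnormSq, hre] at hnorm
  exact mul_left_cancel₀ (pow_ne_zero 2 hc) (by linear_combination -2 * hnorm)

theorem stmt16 (θ : ℝ) (hθ : θ ∈ Set.Ioo 0 (Real.pi / 2)) (c : ℝ) (hc : 0 < c)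
    (α β γ : ℂ) :
    ¬ ((β + γ = 0 ∨
          (‖β‖ = ‖γ‖ ∧ 0 < ‖β‖ ∧ α = 0) ∨
          (‖β‖ = ‖γ‖ ∧ 0 < ‖β‖ ∧ α ≠ 0 ∧
            ∃ m : ℤ, Complex.arg β + Complex.arg γ - 2 * Complex.arg α
              = Real.pi + 2 * Real.pi * m)) ∧
        (‖α‖ ^ 2 = c ∧ ‖β‖ ^ 2 + ‖γ‖ ^ 2 = c ∧
          β * (starRingEnd ℂ) γ + (starRingEnd ℂ) β * γ = 0 ∧
          α * ((starRingEnd ℂ) β - (starRingEnd ℂ) γ) + (starRingEnd ℂ) α * (β - γ)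
            = ((2 * c * Real.cos θ : ℝ) : ℂ))) := by
  rintro ⟨hsym, hα, hβγ, horth, hcurrent⟩
  rcases hsym with hsum | ⟨-, -, rfl⟩ | ⟨hnorm, -, -, m, harg⟩
  · obtain rfl : γ = -β := eq_neg_of_add_eq_zero_right hsum
    have hβ : ((‖β‖ ^ 2 : ℝ) : ℂ) = 0 := by
      simp only [map_neg] at horth
      push_cast
      rw [← mul_conj']
      linear_combination -horth / 2
    rw [norm_neg, ofReal_eq_zero.mp hβ] at hβγ
    linarith
  · simp at hα
    linarith
  · have hγ : conj α * γ = -conj (conj α * β) := by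
      refine eq_neg_conj_of_mul_eq_neg_norm_mul ?_ (by simp [hnorm])
      rw [show conj α * β * (conj α * γ) = conj α ^ 2 * (β * γ) by ring,
        conj_sq_mul_mul_eq_norm_mul_exp_arg, harg, exp_pi_add_two_pi_int_mul_I]
      simp only [norm_mul, norm_conj]
      push_cast; ring
    have hβ : ‖β‖ ^ 2 = c / 2 := by rw [← hnorm] at hβγ; linarith
    have hcos := cos_sq_eq_one_of_conj_mul_eq_neg_conj hc.ne' hα hβ hγ horth hcurrent
    have hsin : 0 < Real.sin θ :=
      Real.sin_pos_of_pos_of_lt_pi hθ.1 (by linarith [hθ.2, Real.pi_pos])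
    nlinarith [Real.sin_sq_add_cos_sq θ]
end

section
/- For the quantum walk with coin H(θ), θ ∈ (0, π/2), and initial qubit state φ = (1, 0) at the origin, the limit of the total left-chirality probability is lim_{n→∞} ∑_k |Ψ_k^L(n)|² = 1 − (sin θ)/2, and lim_{n→∞} ∑_k |Ψ_k^R(n)|² = (sin θ)/2. -/
noncomputable section
namespace QW19
open Real Filter MeasureTheory intervalIntegral Finset Complex
set_option linter.unusedSectionVars false
set_option maxHeartbeats 1000000




/-- phase function -/
def om (c x : ℝ) : ℝ := Real.arcsin (c * Real.sin x)
/-- cos of phase -/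
def wf (c x : ℝ) : ℝ := Real.sqrt (1 - (c * Real.sin x) ^ 2)
def af (c x : ℝ) : ℝ := (c * Real.cos x + wf c x) / (2 * wf c x)
def bf (c x : ℝ) : ℝ := (wf c x - c * Real.cos x) / (2 * wf c x)
def hh (c x : ℝ) : ℝ := 1 / (1 - (c * Real.sin x) ^ 2)

section basic
variable {c s : ℝ} (hc : 0 < c) (hs : 0 < s) (hcs : c ^ 2 + s ^ 2 = 1)

include hc hs hcs

lemma one_sub_pos (x : ℝ) : s ^ 2 ≤ 1 - (c * Real.sin x) ^ 2 := by
  have h1 : (c * Real.sin x) ^ 2 ≤ c ^ 2 := by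
    have := Real.sin_sq_le_one x
    have : c ^ 2 * Real.sin x ^ 2 ≤ c ^ 2 * 1 := by nlinarith [sq_nonneg c]
    nlinarith
  nlinarith

lemma wf_pos (x : ℝ) : s ≤ wf c x := by
  have h := one_sub_pos hc hs hcs (s := s) x
  have : s = Real.sqrt (s ^ 2) := by rw [Real.sqrt_sq hs.le]
  rw [this]
  exact Real.sqrt_le_sqrt h

lemma wf_sq (x : ℝ) : wf c x ^ 2 = 1 - (c * Real.sin x) ^ 2 := by
  have h := one_sub_pos hc hs hcs (s := s) x
  exact Real.sq_sqrt (by nlinarith)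

lemma abs_le_one (x : ℝ) : -1 ≤ c * Real.sin x ∧ c * Real.sin x ≤ 1 := by
  have h := one_sub_pos hc hs hcs (s := s) x
  constructor <;> nlinarith

lemma sin_om (x : ℝ) : Real.sin (om c x) = c * Real.sin x := by
  obtain ⟨h1, h2⟩ := abs_le_one hc hs hcs (s := s) x
  exact Real.sin_arcsin h1 h2

lemma cos_om (x : ℝ) : Real.cos (om c x) = wf c x := by
  rw [om, Real.cos_arcsin, wf]

lemma af_add_bf (x : ℝ) : af c x + bf c x = 1 := by
  have hw := wf_pos hc hs hcs (s := s) x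
  have hw0 : wf c x ≠ 0 := by linarith
  rw [af, bf]
  field_simp
  ring

end basic



def Ek (t : ℝ) : ℂ := Complex.exp (t * Complex.I)

lemma Ek_ne_zero (t : ℝ) : Ek t ≠ 0 := Complex.exp_ne_zero _

lemma Ek_neg (t : ℝ) : Ek (-t) = (Ek t)⁻¹ := by
  rw [Ek, Ek, ← Complex.exp_neg]; push_cast; ring_nf

lemma Ek_pow (t : ℝ) (m : ℕ) : (Ek t) ^ m = Ek (m * t) := by
  rw [Ek, Ek, ← Complex.exp_nat_mul]; push_cast; ring_nf

lemma conj_Ek (t : ℝ) : (starRingEnd ℂ) (Ek t) = (Ek t)⁻¹ := by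
  rw [← Ek_neg, Ek, Ek, ← Complex.exp_conj]
  congr 1
  simp [Complex.conj_I]

lemma Ek_re_im (t : ℝ) : Ek t = (Real.cos t : ℂ) + (Real.sin t : ℂ) * Complex.I := by
  rw [Ek, Complex.exp_mul_I]; push_cast; ring_nf

lemma Ek_add_inv (t : ℝ) : Ek t + (Ek t)⁻¹ = 2 * (Real.cos t : ℂ) := by
  rw [← Ek_neg, Ek_re_im, Ek_re_im]
  push_cast [Real.cos_neg, Real.sin_neg]
  ring


section closed
variable {c s : ℝ} (hc : 0 < c) (hs : 0 < s) (hcs : c ^ 2 + s ^ 2 = 1)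

def F (c : ℝ) (n : ℕ) (x : ℝ) : ℂ :=
  (af c x : ℂ) * ((Ek (om c x))⁻¹) ^ n + (bf c x : ℂ) * (-1) ^ n * (Ek (om c x)) ^ n

include hc hs hcs

lemma key_id (x : ℝ) : (Ek (om c x))⁻¹ - Ek (om c x) = (c : ℂ) * ((Ek x)⁻¹ - Ek x) := by
  rw [← Ek_neg, ← Ek_neg, Ek_re_im, Ek_re_im, Ek_re_im, Ek_re_im]
  push_cast [Real.cos_neg, Real.sin_neg, sin_om hc hs hcs]
  ring

lemma F_zero (x : ℝ) : F c 0 x = 1 := by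
  have h := af_add_bf hc hs hcs (s := s) x
  simp [F]
  norm_cast

lemma af_sub_bf (x : ℝ) : (af c x - bf c x) * wf c x = c * Real.cos x := by
  have hw := wf_pos hc hs hcs (s := s) x
  have hw0 : wf c x ≠ 0 := by linarith
  rw [af, bf]
  field_simp
  ring

lemma F_one (x : ℝ) : F c 1 x = (c : ℂ) * (Ek x)⁻¹ := by
  have hab := af_sub_bf hc hs hcs (s := s) x
  have hadd := af_add_bf hc hs hcs (s := s) x
  rw [F, ← Ek_neg, ← Ek_neg]
  simp only [Ek_re_im, pow_one]
  simp only [Real.cos_neg, Real.sin_neg, sin_om hc hs hcs, cos_om hc hs hcs (s := s)]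
  simp only [Complex.ext_iff, Complex.add_re, Complex.add_im, Complex.mul_re, Complex.mul_im,
    Complex.sub_re, Complex.sub_im, Complex.ofReal_re, Complex.ofReal_im, Complex.I_re,
    Complex.I_im, Complex.neg_re, Complex.neg_im, Complex.one_re, Complex.one_im]
  constructor
  · linear_combination hab
  · linear_combination (-(c * Real.sin x)) * hadd

lemma F_rec (n : ℕ) (x : ℝ) :
    F c (n + 2) x = (c : ℂ) * ((Ek x)⁻¹ - Ek x) * F c (n + 1) x + F c n x := by
  have hkey := key_id hc hs hcs (s := s) x
  have hu : Ek (om c x) ≠ 0 := Ek_ne_zero _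
  have hw : Ek (om c x) * (Ek (om c x))⁻¹ = 1 := mul_inv_cancel₀ hu
  rw [← hkey]
  simp only [F, pow_succ]
  linear_combination ((af c x : ℂ) * ((Ek (om c x))⁻¹) ^ n
    + (bf c x : ℂ) * (-1) ^ n * (Ek (om c x)) ^ n) * hw

omit hc hs hcs in
lemma F_normsq (n : ℕ) (x : ℝ) :
    F c n x * (starRingEnd ℂ) (F c n x) =
      (((af c x) ^ 2 + (bf c x) ^ 2
        + 2 * af c x * bf c x * (-1 : ℝ) ^ n * Real.cos (2 * n * om c x) : ℝ) : ℂ) := by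
  have hu : Ek (om c x) ≠ 0 := Ek_ne_zero _
  have hUW : Ek (om c x) ^ n * ((Ek (om c x))⁻¹) ^ n = 1 := by
    rw [← mul_pow, mul_inv_cancel₀ hu, one_pow]
  have hcos : Ek (om c x) ^ n * Ek (om c x) ^ n
      + ((Ek (om c x))⁻¹) ^ n * ((Ek (om c x))⁻¹) ^ n
      = 2 * (Real.cos (2 * n * om c x) : ℂ) := by
    have h1 : Ek (om c x) ^ n * Ek (om c x) ^ n = Ek (2 * n * om c x) := by
      rw [← pow_add, Ek_pow]
      congr 1
      push_cast
      ring
    have h2 : ((Ek (om c x))⁻¹) ^ n * ((Ek (om c x))⁻¹) ^ n = (Ek (2 * n * om c x))⁻¹ := by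
      rw [inv_pow, ← mul_inv, h1]
    rw [h1, h2, Ek_add_inv]
  have hσ : ((-1 : ℂ) ^ n) ^ 2 = 1 := by
    rw [← pow_mul, mul_comm, pow_mul]
    norm_num
  have hconj : (starRingEnd ℂ) (F c n x)
      = (af c x : ℂ) * (Ek (om c x)) ^ n + (bf c x : ℂ) * (-1) ^ n * ((Ek (om c x))⁻¹) ^ n := by
    simp [F, map_add, map_mul, map_pow, map_inv₀, conj_Ek, inv_inv, Complex.conj_ofReal]
  rw [hconj, F]
  push_cast at hcos ⊢
  linear_combination ((af c x : ℂ) ^ 2 + (bf c x : ℂ) ^ 2 * ((-1 : ℂ) ^ n) ^ 2) * hUW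
    + (af c x : ℂ) * (bf c x : ℂ) * (-1 : ℂ) ^ n * hcos + (bf c x : ℂ) ^ 2 * hσ

lemma af_bf_sq (x : ℝ) :
    (af c x) ^ 2 + (bf c x) ^ 2 = 1 - s ^ 2 / 2 * hh c x := by
  have hw := wf_pos hc hs hcs (s := s) x
  have hw0 : wf c x ≠ 0 := by linarith
  have hw2 := wf_sq hc hs hcs (s := s) x
  have hpy := Real.sin_sq_add_cos_sq x
  have h3 : c ^ 2 * Real.cos x ^ 2 + s ^ 2 = wf c x ^ 2 := by
    rw [hw2]
    linear_combination c ^ 2 * hpy + hcs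
  rw [af, bf, hh, ← hw2]
  field_simp
  linear_combination 2 * h3

lemma af_mul_bf (x : ℝ) :
    af c x * bf c x = s ^ 2 / 4 * hh c x := by
  have hw := wf_pos hc hs hcs (s := s) x
  have hw0 : wf c x ≠ 0 := by linarith
  have hw2 := wf_sq hc hs hcs (s := s) x
  have hpy := Real.sin_sq_add_cos_sq x
  have h3 : c ^ 2 * Real.cos x ^ 2 + s ^ 2 = wf c x ^ 2 := by
    rw [hw2]
    linear_combination c ^ 2 * hpy + hcs
  rw [af, bf, hh, ← hw2]
  field_simp
  linear_combination (-4) * h3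

omit hc hs hcs in
lemma cont_om : Continuous (om c) :=
  Real.continuous_arcsin.comp (continuous_const.mul Real.continuous_sin)

omit hc hs hcs in
lemma cont_wf : Continuous (wf c) :=
  Real.continuous_sqrt.comp (by fun_prop)

lemma denom_ne (x : ℝ) : 1 - (c * Real.sin x) ^ 2 ≠ 0 := by
  have := one_sub_pos hc hs hcs (s := s) x
  nlinarith

lemma cont_hh : Continuous (hh c) := by
  apply Continuous.div continuous_const (by fun_prop)
  exact fun x => denom_ne hc hs hcs (s := s) x

lemma hh_le (x : ℝ) : |hh c x| ≤ 1 / s ^ 2 := by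
  have h1 := one_sub_pos hc hs hcs (s := s) x
  have h2 : 0 < s ^ 2 := by positivity
  have hpos : (0:ℝ) < 1 - (c * Real.sin x) ^ 2 := by nlinarith
  rw [hh]
  have habs : |1 / (1 - (c * Real.sin x) ^ 2)| = 1 / (1 - (c * Real.sin x) ^ 2) :=
    abs_of_nonneg (by positivity)
  rw [habs, div_le_div_iff₀ hpos h2]
  nlinarith

lemma wf_ne (x : ℝ) : wf c x ≠ 0 := by
  have := wf_pos hc hs hcs (s := s) x; linarith

lemma cont_af : Continuous (af c) := by
  have hw := cont_wf (c := c)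
  apply Continuous.div ((continuous_const.mul Real.continuous_cos).add hw)
    (continuous_const.mul hw)
  intro x
  have h := wf_pos hc hs hcs (s := s) x
  have : 0 < wf c x := lt_of_lt_of_le hs h
  exact mul_ne_zero two_ne_zero this.ne'

lemma cont_bf : Continuous (bf c) := by
  have hw := cont_wf (c := c)
  apply Continuous.div (hw.sub (continuous_const.mul Real.continuous_cos))
    (continuous_const.mul hw)
  intro x
  have h := wf_pos hc hs hcs (s := s) x
  have : 0 < wf c x := lt_of_lt_of_le hs h
  exact mul_ne_zero two_ne_zero this.ne'

lemma hh_int (a b : ℝ) : IntervalIntegrable (hh c) volume a b :=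
  (cont_hh hc hs hcs (s := s)).intervalIntegrable a b

lemma hh_periodic : Function.Periodic (hh c) π := by
  intro x
  simp [hh, Real.sin_add_pi]

/-- antiderivative of hh on (-π/2, π/2) -/
lemma hh_deriv {x : ℝ} (hx : x ∈ Set.Ioo (-(π/2)) (π/2)) :
    HasDerivAt (fun y => (1/s) * Real.arctan (s * Real.tan y)) (hh c x) x := by
  have hcosx : 0 < Real.cos x := Real.cos_pos_of_mem_Ioo hx
  have htan := Real.hasDerivAt_tan hcosx.ne'
  have harctan := Real.hasDerivAt_arctan (s * Real.tan x)
  have h1 : HasDerivAt (fun y => Real.arctan (s * Real.tan y))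
      ((1 / (1 + (s * Real.tan x) ^ 2)) * (s * (1 / Real.cos x ^ 2))) x :=
    by have := harctan.comp x ((htan.const_mul s)); exact this
  have h2 := h1.const_mul (1/s)
  refine h2.congr_deriv (Eq.symm ?_)
  have hpy := Real.sin_sq_add_cos_sq x
  rw [hh, Real.tan_eq_sin_div_cos]
  have hd := denom_ne hc hs hcs (s := s) x
  have e : 1 - (c * Real.sin x) ^ 2 = Real.cos x ^ 2 + s ^ 2 * Real.sin x ^ 2 := by
    linear_combination (-1) * hpy - Real.sin x ^ 2 * hcs
  rw [e] at hd ⊢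
  have hcx := hcosx.ne'
  field_simp

lemma integral_hh_sym {b : ℝ} (hb : b ∈ Set.Ico 0 (π/2)) :
    ∫ x in (-b)..b, hh c x = (2/s) * Real.arctan (s * Real.tan b) := by
  rw [intervalIntegral.integral_eq_sub_of_hasDerivAt (f := fun y => (1/s) * Real.arctan (s * Real.tan y))
    (fun x hx => hh_deriv hc hs hcs (s := s) ?_) (hh_int hc hs hcs (s := s) _ _)]
  · rw [Real.tan_neg, mul_neg, Real.arctan_neg]
    ring
  · have hb1 := hb.1
    have hb2 := hb.2
    rw [Set.uIcc_of_le (by linarith : -b ≤ b)] at hx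
    obtain ⟨h1, h2⟩ := hx
    exact ⟨by linarith, by linarith⟩

lemma integral_hh_half : ∫ x in (-(π/2))..(π/2), hh c x = π / s := by
  have hint : ∀ a b : ℝ, IntervalIntegrable (hh c) volume a b := fun a b => hh_int hc hs hcs (s := s) a b
  have hcont : Continuous fun b : ℝ => ∫ x in (0:ℝ)..b, hh c x :=
    intervalIntegral.continuous_primitive hint 0
  have hsym : ∀ b : ℝ, (∫ x in (-b)..b, hh c x)
      = (∫ x in (0:ℝ)..b, hh c x) - (∫ x in (0:ℝ)..(-b), hh c x) := by
    intro b
    rw [← intervalIntegral.integral_add_adjacent_intervals (b := 0) (hint (-b) 0) (hint 0 b),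
      intervalIntegral.integral_symm]
    ring
  have hc1 : Filter.Tendsto (fun b : ℝ => ∫ x in (-b)..b, hh c x) (nhdsWithin (π/2) (Set.Iio (π/2)))
      (nhds (∫ x in (-(π/2))..(π/2), hh c x)) := by
    simp only [hsym, hsym (π/2)]
    have : Filter.Tendsto (fun b : ℝ => (∫ x in (0:ℝ)..b, hh c x) - (∫ x in (0:ℝ)..(-b), hh c x))
        (nhds (π/2)) (nhds ((∫ x in (0:ℝ)..(π/2), hh c x) - (∫ x in (0:ℝ)..(-(π/2)), hh c x))) := by
      exact (hcont.tendsto _).sub ((hcont.tendsto _).comp (continuous_neg.tendsto _))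
    exact this.mono_left nhdsWithin_le_nhds
  have hc2 : Filter.Tendsto (fun b : ℝ => ∫ x in (-b)..b, hh c x)
      (nhdsWithin (π/2) (Set.Iio (π/2))) (nhds (π/s)) := by
    have htan : Filter.Tendsto (fun b : ℝ => (2/s) * Real.arctan (s * Real.tan b))
        (nhdsWithin (π/2) (Set.Iio (π/2))) (nhds ((2/s) * (π/2))) := by
      apply Filter.Tendsto.const_mul
      apply (tendsto_nhds_of_tendsto_nhdsWithin Real.tendsto_arctan_atTop).comp
      exact (Real.tendsto_tan_pi_div_two).const_mul_atTop hs
    have heq : ∀ᶠ b in nhdsWithin (π/2) (Set.Iio (π/2)),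
        (2/s) * Real.arctan (s * Real.tan b) = ∫ x in (-b)..b, hh c x := by
      filter_upwards [Ioo_mem_nhdsLT_of_mem (Set.mem_Ioc.mpr ⟨by positivity, le_refl _⟩)] with b hb
      rw [integral_hh_sym hc hs hcs (s := s) ⟨hb.1.le, hb.2⟩]
    have h25 : (2/s) * (π/2) = π/s := by field_simp
    rw [← h25]
    exact htan.congr' heq
  exact tendsto_nhds_unique hc1 hc2

lemma integral_hh_full : ∫ x in (0:ℝ)..(2*π), hh c x = 2*π/s := by
  have hint : ∀ a b : ℝ, IntervalIntegrable (hh c) volume a b := fun a b => hh_int hc hs hcs (s := s) a b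
  have hper := hh_periodic (c := c) (s := s) (hc := hc) (hs := hs) (hcs := hcs)
  have h1 : ∫ x in (0:ℝ)..π, hh c x = π/s := by
    have h := hper.intervalIntegral_add_eq 0 (-(π/2))
    rw [zero_add] at h
    have e : -(π/2) + π = π/2 := by ring
    rw [e] at h
    rw [h, integral_hh_half hc hs hcs (s := s)]
  have h2 : ∫ x in π..(2*π), hh c x = π/s := by
    have h := hper.intervalIntegral_add_eq π 0
    rw [zero_add] at h
    have e : π + π = 2*π := by ring
    rw [e] at h
    rw [h, h1]
  rw [← intervalIntegral.integral_add_adjacent_intervals (b := π) (hint 0 π) (hint π (2*π)), h1, h2]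
  ring

/-- derivative of wf -/
def wfd (c x : ℝ) : ℝ := -((c * Real.sin x) * (c * Real.cos x)) / wf c x
/-- derivative of om -/
def omd (c x : ℝ) : ℝ := c * Real.cos x / wf c x

lemma hasDerivAt_wf (x : ℝ) : HasDerivAt (wf c) (wfd c x) x := by
  have h1 : HasDerivAt (fun y => c * Real.sin y) (c * Real.cos x) x :=
    (Real.hasDerivAt_sin x).const_mul c
  have h2 : HasDerivAt (fun y => 1 - (c * Real.sin y) ^ 2)
      (-(2 * (c * Real.sin x) * (c * Real.cos x))) x := by
    have := (h1.pow 2).const_sub 1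
    refine this.congr_deriv (Eq.symm ?_)
    push_cast
    ring
  have h3 := h2.sqrt (denom_ne hc hs hcs (s := s) x)
  refine h3.congr_deriv (Eq.symm ?_)
  rw [wfd, wf]
  ring

lemma hasDerivAt_om (x : ℝ) : HasDerivAt (om c) (omd c x) x := by
  have hlt : (c * Real.sin x) ^ 2 < 1 := by
    have := one_sub_pos hc hs hcs (s := s) x
    nlinarith
  have h1 : HasDerivAt (fun y => c * Real.sin y) (c * Real.cos x) x :=
    (Real.hasDerivAt_sin x).const_mul c
  have harc := Real.hasDerivAt_arcsin
    (by intro h; rw [h] at hlt; norm_num at hlt)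
    (by intro h; rw [h] at hlt; norm_num at hlt) (x := c * Real.sin x)
  have := harc.comp x h1
  refine this.congr_deriv (Eq.symm ?_)
  rw [omd, wf]
  field_simp

lemma cont_wfd : Continuous (wfd c) := by
  apply Continuous.div (by fun_prop) (cont_wf (c := c))
  exact fun x => wf_ne hc hs hcs (s := s) x

lemma cont_omd : Continuous (omd c) := by
  apply Continuous.div (by fun_prop) (cont_wf (c := c))
  exact fun x => wf_ne hc hs hcs (s := s) x

lemma hh_eq_wf (x : ℝ) : hh c x = 1 / (wf c x) ^ 2 := by
  rw [hh, wf_sq hc hs hcs (s := s)]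

/-- Integration by parts bound on an interval where cos does not vanish. -/
lemma ibp_bound {a b : ℝ} (hab : a ≤ b) (hcos : ∀ x ∈ Set.Icc a b, Real.cos x ≠ 0) :
    ∃ K : ℝ, ∀ n : ℕ, 1 ≤ n →
      |∫ x in a..b, hh c x * Real.cos (2 * n * om c x)| ≤ K / n := by
  classical
  set g : ℝ → ℝ := fun x => c * Real.cos x * wf c x with hgdef
  set gd : ℝ → ℝ := fun x => c * -Real.sin x * wf c x + c * Real.cos x * wfd c x with hgddef
  set uu : ℝ → ℝ := fun x => (g x)⁻¹ with huudef
  set uud : ℝ → ℝ := fun x => -gd x / g x ^ 2 with huuddef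
  have hwfne : ∀ x, wf c x ≠ 0 := fun x => wf_ne hc hs hcs (s := s) x
  have hgne : ∀ x ∈ Set.Icc a b, g x ≠ 0 := by
    intro x hx
    exact mul_ne_zero (mul_ne_zero hc.ne' (hcos x hx)) (hwfne x)
  have hg : ∀ x, HasDerivAt g (gd x) x := by
    intro x
    exact ((Real.hasDerivAt_cos x).const_mul c).mul (hasDerivAt_wf hc hs hcs (s := s) x)
  have huu : ∀ x ∈ Set.Icc a b, HasDerivAt uu (uud x) x := by
    intro x hx
    exact (hg x).inv (hgne x hx)
  have hcontg : Continuous g := by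
    exact (continuous_const.mul Real.continuous_cos).mul (cont_wf (c := c))
  have hcontgd : Continuous gd := by
    exact ((continuous_const.mul Real.continuous_sin.neg).mul (cont_wf (c := c))).add
      ((continuous_const.mul Real.continuous_cos).mul (cont_wfd hc hs hcs (s := s)))
  have hcontuu : ContinuousOn uu (Set.Icc a b) :=
    ContinuousOn.inv₀ hcontg.continuousOn hgne
  have hcontuud : ContinuousOn uud (Set.Icc a b) := by
    apply ContinuousOn.div hcontgd.continuousOn.neg (hcontg.pow 2).continuousOn
    intro x hx
    exact pow_ne_zero 2 (hgne x hx)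
  obtain ⟨M1, hM1⟩ := (isCompact_Icc (a := a) (b := b)).exists_bound_of_continuousOn hcontuu
  obtain ⟨M2, hM2⟩ := (isCompact_Icc (a := a) (b := b)).exists_bound_of_continuousOn hcontuud
  have hM1' : 0 ≤ M1 := le_trans (norm_nonneg _) (hM1 a ⟨le_refl a, hab⟩)
  have hM2' : 0 ≤ M2 := le_trans (norm_nonneg _) (hM2 a ⟨le_refl a, hab⟩)
  refine ⟨M1 + M2 * (b - a) / 2, ?_⟩
  intro n hn
  set v : ℝ → ℝ := fun x => Real.sin (2 * n * om c x) with hvdef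
  set vd : ℝ → ℝ := fun x => Real.cos (2 * n * om c x) * (2 * n * omd c x) with hvddef
  have hv : ∀ x, HasDerivAt v (vd x) x := by
    intro x
    exact ((hasDerivAt_om hc hs hcs (s := s) x).const_mul (2 * (n:ℝ))).sin
  have hvb : ∀ x, |v x| ≤ 1 := fun x => Real.abs_sin_le_one _
  have hcontvd : Continuous vd := by
    apply Continuous.mul
    · exact Real.continuous_cos.comp (continuous_const.mul (cont_om (c := c)))
    · exact continuous_const.mul (cont_omd hc hs hcs (s := s))
  -- IBP
  have hibp := intervalIntegral.integral_mul_deriv_eq_deriv_mul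
    (u := uu) (u' := uud) (v := v) (v' := vd)
    (fun x hx => huu x (by rwa [Set.uIcc_of_le hab] at hx))
    (fun x hx => hv x)
    ((hcontuud.mono (by rw [Set.uIcc_of_le hab])).intervalIntegrable)
    (hcontvd.intervalIntegrable a b)
  -- pointwise identity on the interval
  have hpt : Set.EqOn (fun x => (2 * (n:ℝ)) * (hh c x * Real.cos (2 * n * om c x)))
      (fun x => uu x * vd x) (Set.uIcc a b) := by
    intro x hx
    rw [Set.uIcc_of_le hab] at hx
    have hcx := hcos x hx
    have hwx := hwfne x
    simp only [huudef, hvddef, hgdef, omd]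
    rw [hh_eq_wf hc hs hcs (s := s)]
    field_simp
  have heq : (2 * (n:ℝ)) * ∫ x in a..b, hh c x * Real.cos (2 * n * om c x)
      = ∫ x in a..b, uu x * vd x := by
    rw [← intervalIntegral.integral_const_mul]
    exact intervalIntegral.integral_congr hpt
  have hIb : |∫ x in a..b, uud x * v x| ≤ M2 * (b - a) := by
    have hbd : ∀ x ∈ Set.uIoc a b, ‖uud x * v x‖ ≤ M2 := by
      intro x hx
      have hx' : x ∈ Set.Icc a b := by
        apply Set.mem_Icc_of_Ioc
        rwa [Set.uIoc_of_le hab] at hx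
      calc ‖uud x * v x‖ = ‖uud x‖ * |v x| := by
            rw [norm_mul, Real.norm_eq_abs (v x)]
        _ ≤ M2 * 1 := mul_le_mul (hM2 x hx') (hvb x) (abs_nonneg _) hM2'
        _ = M2 := mul_one M2
    have := intervalIntegral.norm_integral_le_of_norm_le_const hbd
    rwa [Real.norm_eq_abs, _root_.abs_of_nonneg (by linarith : (0:ℝ) ≤ b - a)] at this
  have hn' : (0:ℝ) < n := by exact_mod_cast hn
  have hval : ∫ x in a..b, hh c x * Real.cos (2 * n * om c x)
      = (uu b * v b - uu a * v a - ∫ x in a..b, uud x * v x) / (2 * (n:ℝ)) := by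
    rw [← hibp, ← heq]
    field_simp
  have hm : ∀ y ∈ Set.Icc a b, |uu y * v y| ≤ M1 := by
    intro y hy
    rw [abs_mul]
    calc |uu y| * |v y| ≤ M1 * 1 :=
          mul_le_mul (by rw [← Real.norm_eq_abs]; exact hM1 y hy) (hvb y) (abs_nonneg _) hM1'
      _ = M1 := mul_one M1
  have hX : |uu b * v b - uu a * v a - ∫ x in a..b, uud x * v x|
      ≤ 2 * (M1 + M2 * (b - a) / 2) := by
    have t1 := hm b ⟨hab, le_refl b⟩
    have t2 := hm a ⟨le_refl a, hab⟩
    calc |uu b * v b - uu a * v a - ∫ x in a..b, uud x * v x|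
        ≤ |uu b * v b - uu a * v a| + |∫ x in a..b, uud x * v x| := abs_sub _ _
      _ ≤ (|uu b * v b| + |uu a * v a|) + |∫ x in a..b, uud x * v x| := by
          gcongr
          exact abs_sub _ _
      _ ≤ (M1 + M1) + M2 * (b - a) := by gcongr
      _ = 2 * (M1 + M2 * (b - a) / 2) := by ring
  rw [hval, abs_div, _root_.abs_of_nonneg (by positivity : (0:ℝ) ≤ 2 * (n:ℝ))]
  rw [div_le_div_iff₀ (by positivity) hn']
  calc |uu b * v b - uu a * v a - ∫ x in a..b, uud x * v x| * n
      ≤ (2 * (M1 + M2 * (b - a) / 2)) * n := mul_le_mul_of_nonneg_right hX (by positivity)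
    _ = (M1 + M2 * (b - a) / 2) * (2 * n) := by ring

lemma osc_tendsto :
    Filter.Tendsto (fun n : ℕ => ∫ x in (0:ℝ)..(2*π), hh c x * Real.cos (2*n*om c x))
      atTop (nhds 0) := by
  have hπ := Real.pi_pos
  have hcont : ∀ n : ℕ, Continuous (fun x => hh c x * Real.cos (2*n*om c x)) := by
    intro n
    exact (cont_hh hc hs hcs (s := s)).mul
      (Real.continuous_cos.comp (continuous_const.mul (cont_om (c := c))))
  have hbad : ∀ (n : ℕ) (a b : ℝ), a ≤ b →
      |∫ x in a..b, hh c x * Real.cos (2*n*om c x)| ≤ (1/s^2) * (b-a) := by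
    intro n a b hab
    have hbd : ∀ x ∈ Set.uIoc a b, ‖hh c x * Real.cos (2*n*om c x)‖ ≤ 1/s^2 := by
      intro x _
      rw [norm_mul, Real.norm_eq_abs, Real.norm_eq_abs]
      calc |hh c x| * |Real.cos (2*n*om c x)| ≤ (1/s^2) * 1 :=
            mul_le_mul (hh_le hc hs hcs (s := s) x) (Real.abs_cos_le_one _)
              (abs_nonneg _) (by positivity)
        _ = 1/s^2 := mul_one _
    have := intervalIntegral.norm_integral_le_of_norm_le_const hbd
    rwa [Real.norm_eq_abs, _root_.abs_of_nonneg (by linarith : (0:ℝ) ≤ b - a)] at this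
  rw [Metric.tendsto_atTop]
  intro ε hε
  set δ : ℝ := min (π/4) (ε * s^2 / 16) with hδdef
  have hδ0 : 0 < δ := lt_min (by linarith) (by positivity)
  have hδπ : δ ≤ π/4 := min_le_left _ _
  have hδε : 4*δ/s^2 ≤ ε/4 := by
    have h1 : δ ≤ ε * s^2/16 := min_le_right _ _
    rw [div_le_div_iff₀ (by positivity) (by norm_num)]
    nlinarith [sq_nonneg s, hs]
  -- good interval bounds
  obtain ⟨K1, hK1⟩ := ibp_bound hc hs hcs (s := s) (a := 0) (b := π/2 - δ)
    (by linarith) (fun x hx => (Real.cos_pos_of_mem_Ioo ⟨by linarith [hx.1], by linarith [hx.2]⟩).ne')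
  obtain ⟨K2, hK2⟩ := ibp_bound hc hs hcs (s := s) (a := π/2 + δ) (b := 3*π/2 - δ)
    (by linarith) (fun x hx => (Real.cos_neg_of_pi_div_two_lt_of_lt
      (by linarith [hx.1]) (by linarith [hx.2])).ne)
  obtain ⟨K3, hK3⟩ := ibp_bound hc hs hcs (s := s) (a := 3*π/2 + δ) (b := 2*π)
    (by linarith) (fun x hx => by
      rw [← Real.cos_sub_two_pi]
      exact (Real.cos_pos_of_mem_Ioo ⟨by linarith [hx.1], by linarith [hx.2]⟩).ne')
  have hK1' : 0 ≤ K1 := le_trans (abs_nonneg _) (by simpa using hK1 1 (le_refl 1))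
  have hK2' : 0 ≤ K2 := le_trans (abs_nonneg _) (by simpa using hK2 1 (le_refl 1))
  have hK3' : 0 ≤ K3 := le_trans (abs_nonneg _) (by simpa using hK3 1 (le_refl 1))
  obtain ⟨N0, hN0⟩ := exists_nat_gt ((K1 + K2 + K3)/(ε/2))
  refine ⟨max N0 1, fun n hn => ?_⟩
  have hn1 : 1 ≤ n := le_trans (le_max_right N0 1) hn
  have hnN0 : (N0:ℝ) ≤ n := by exact_mod_cast le_trans (le_max_left N0 1) hn
  have hn0 : (0:ℝ) < n := by exact_mod_cast hn1
  have hKn : (K1 + K2 + K3)/n < ε/2 := by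
    rw [div_lt_iff₀ hn0]
    have h2 : (K1+K2+K3)/(ε/2) < (n:ℝ) := lt_of_lt_of_le hN0 hnN0
    rw [div_lt_iff₀ (by linarith)] at h2
    linarith
  -- split the integral
  have hsplit : (∫ x in (0:ℝ)..(2*π), hh c x * Real.cos (2*n*om c x))
      = (∫ x in (0:ℝ)..(π/2-δ), hh c x * Real.cos (2*n*om c x))
      + (∫ x in (π/2-δ)..(π/2+δ), hh c x * Real.cos (2*n*om c x))
      + (∫ x in (π/2+δ)..(3*π/2-δ), hh c x * Real.cos (2*n*om c x))
      + (∫ x in (3*π/2-δ)..(3*π/2+δ), hh c x * Real.cos (2*n*om c x))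
      + (∫ x in (3*π/2+δ)..(2*π), hh c x * Real.cos (2*n*om c x)) := by
    have hi : ∀ a b : ℝ, IntervalIntegrable (fun x => hh c x * Real.cos (2*n*om c x)) volume a b :=
      fun a b => (hcont n).intervalIntegrable a b
    rw [intervalIntegral.integral_add_adjacent_intervals (hi 0 (π/2-δ)) (hi (π/2-δ) (π/2+δ)),
      intervalIntegral.integral_add_adjacent_intervals (hi 0 (π/2+δ)) (hi (π/2+δ) (3*π/2-δ)),
      intervalIntegral.integral_add_adjacent_intervals (hi 0 (3*π/2-δ)) (hi (3*π/2-δ) (3*π/2+δ)),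
      intervalIntegral.integral_add_adjacent_intervals (hi 0 (3*π/2+δ)) (hi (3*π/2+δ) (2*π))]
  rw [Real.dist_eq, sub_zero, hsplit]
  have e1 := hK1 n hn1
  have e2 := hK2 n hn1
  have e3 := hK3 n hn1
  have e4 := hbad n (π/2-δ) (π/2+δ) (by linarith)
  have e5 := hbad n (3*π/2-δ) (3*π/2+δ) (by linarith)
  have hsum : |(∫ x in (0:ℝ)..(π/2-δ), hh c x * Real.cos (2*n*om c x))
      + (∫ x in (π/2-δ)..(π/2+δ), hh c x * Real.cos (2*n*om c x))
      + (∫ x in (π/2+δ)..(3*π/2-δ), hh c x * Real.cos (2*n*om c x))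
      + (∫ x in (3*π/2-δ)..(3*π/2+δ), hh c x * Real.cos (2*n*om c x))
      + (∫ x in (3*π/2+δ)..(2*π), hh c x * Real.cos (2*n*om c x))|
      ≤ K1/n + (1/s^2)*(2*δ) + K2/n + (1/s^2)*(2*δ) + K3/n := by
    have h4 : (π/2+δ) - (π/2-δ) = 2*δ := by ring
    have h5 : (3*π/2+δ) - (3*π/2-δ) = 2*δ := by ring
    rw [h4] at e4
    rw [h5] at e5
    calc _ ≤ |(∫ x in (0:ℝ)..(π/2-δ), hh c x * Real.cos (2*n*om c x))
          + (∫ x in (π/2-δ)..(π/2+δ), hh c x * Real.cos (2*n*om c x))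
          + (∫ x in (π/2+δ)..(3*π/2-δ), hh c x * Real.cos (2*n*om c x))
          + (∫ x in (3*π/2-δ)..(3*π/2+δ), hh c x * Real.cos (2*n*om c x))|
          + |(∫ x in (3*π/2+δ)..(2*π), hh c x * Real.cos (2*n*om c x))| := abs_add_le _ _
      _ ≤ (|(∫ x in (0:ℝ)..(π/2-δ), hh c x * Real.cos (2*n*om c x))
          + (∫ x in (π/2-δ)..(π/2+δ), hh c x * Real.cos (2*n*om c x))
          + (∫ x in (π/2+δ)..(3*π/2-δ), hh c x * Real.cos (2*n*om c x))|
          + |(∫ x in (3*π/2-δ)..(3*π/2+δ), hh c x * Real.cos (2*n*om c x))|)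
          + |(∫ x in (3*π/2+δ)..(2*π), hh c x * Real.cos (2*n*om c x))| := by
            gcongr
            exact abs_add_le _ _
      _ ≤ ((|(∫ x in (0:ℝ)..(π/2-δ), hh c x * Real.cos (2*n*om c x))
          + (∫ x in (π/2-δ)..(π/2+δ), hh c x * Real.cos (2*n*om c x))|
          + |(∫ x in (π/2+δ)..(3*π/2-δ), hh c x * Real.cos (2*n*om c x))|)
          + |(∫ x in (3*π/2-δ)..(3*π/2+δ), hh c x * Real.cos (2*n*om c x))|)
          + |(∫ x in (3*π/2+δ)..(2*π), hh c x * Real.cos (2*n*om c x))| := by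
            gcongr
            exact abs_add_le _ _
      _ ≤ (((|(∫ x in (0:ℝ)..(π/2-δ), hh c x * Real.cos (2*n*om c x))|
          + |(∫ x in (π/2-δ)..(π/2+δ), hh c x * Real.cos (2*n*om c x))|)
          + |(∫ x in (π/2+δ)..(3*π/2-δ), hh c x * Real.cos (2*n*om c x))|)
          + |(∫ x in (3*π/2-δ)..(3*π/2+δ), hh c x * Real.cos (2*n*om c x))|)
          + |(∫ x in (3*π/2+δ)..(2*π), hh c x * Real.cos (2*n*om c x))| := by
            gcongr
            exact abs_add_le _ _
      _ ≤ K1/n + (1/s^2)*(2*δ) + K2/n + (1/s^2)*(2*δ) + K3/n := by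
            push_cast at e1 e2 e3 e4 e5 ⊢
            linarith
  calc _ ≤ K1/n + (1/s^2)*(2*δ) + K2/n + (1/s^2)*(2*δ) + K3/n := hsum
    _ = (K1+K2+K3)/n + 4*δ/s^2 := by field_simp; ring
    _ < ε/2 + ε/4 := by
        apply add_lt_add_of_lt_of_le hKn hδε
    _ < ε := by linarith

end closed

lemma Ek_zero : Ek 0 = 1 := by simp [Ek]

lemma Ek_mul (a b : ℝ) : Ek a * Ek b = Ek (a + b) := by
  rw [Ek, Ek, Ek, ← Complex.exp_add]
  push_cast
  ring_nf

lemma intEk (m : ℤ) : (∫ x in (0:ℝ)..(2*π), Ek ((m:ℝ)*x)) = if m = 0 then ((2*π:ℝ):ℂ) else 0 := by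
  by_cases hm : m = 0
  · simp [hm, Ek]
  · simp only [hm, if_false]
    have hm' : ((m:ℂ) * Complex.I) ≠ 0 := by
      simp [Complex.I_ne_zero, hm]
    have heq : ∀ x : ℝ, Ek ((m:ℝ)*x) = Complex.exp (((m:ℂ) * Complex.I) * (x:ℝ)) := by
      intro x
      rw [Ek]
      congr 1
      push_cast
      ring
    rw [intervalIntegral.integral_congr (fun x _ => heq x)]
    rw [integral_exp_mul_complex hm']
    have h1 : Complex.exp ((m:ℂ) * Complex.I * ((2*π:ℝ):ℂ)) = 1 := by
      rw [show (m:ℂ) * Complex.I * ((2*π:ℝ):ℂ) = (m:ℂ) * (2*(π:ℂ)*Complex.I) by push_cast; ring]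
      exact Complex.exp_int_mul_two_pi_mul_I m
    rw [h1]
    simp

lemma cont_Ek (a : ℝ) : Continuous (fun x : ℝ => Ek (a*x)) := by
  apply Complex.continuous_exp.comp
  apply Continuous.mul _ continuous_const
  exact Complex.continuous_ofReal.comp (continuous_const.mul continuous_id)

lemma mul_conj_eq (z : ℂ) : z * (starRingEnd ℂ) z = ((‖z‖^2 : ℝ) : ℂ) := by
  rw [Complex.mul_conj]
  norm_cast
  rw [Complex.normSq_eq_norm_sq]

lemma chiral_identity {c s : ℝ} (hcs : c ^ 2 + s ^ 2 = 1) (z w : ℂ) :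
    ‖(c:ℂ) * z + (s:ℂ) * w‖ ^ 2 + ‖(s:ℂ) * z - (c:ℂ) * w‖ ^ 2 = ‖z‖ ^ 2 + ‖w‖ ^ 2 := by
  simp only [Complex.sq_norm, Complex.normSq_apply, Complex.add_re,
    Complex.add_im, Complex.sub_re, Complex.sub_im, Complex.mul_re, Complex.mul_im,
    Complex.ofReal_re, Complex.ofReal_im]
  linear_combination (z.re^2 + z.im^2 + w.re^2 + w.im^2) * hcs

section walk
variable {ΨL ΨR : ℤ × ℕ → ℂ} {c s : ℝ}
  (hL : ∀ (k : ℤ) (n : ℕ), ΨL (k, n + 1) = (c:ℂ) * ΨL (k + 1, n) + (s:ℂ) * ΨR (k + 1, n))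
  (hR : ∀ (k : ℤ) (n : ℕ), ΨR (k, n + 1) = (s:ℂ) * ΨL (k - 1, n) - (c:ℂ) * ΨR (k - 1, n))
  (hL0 : ΨL (0, 0) = 1) (hR0 : ΨR (0, 0) = 0)
  (h0 : ∀ k : ℤ, k ≠ 0 → ΨL (k, 0) = 0 ∧ ΨR (k, 0) = 0)

include hL hR h0

lemma walk_supp : ∀ (n : ℕ) (k : ℤ), (n:ℤ) < |k| → ΨL (k,n) = 0 ∧ ΨR (k,n) = 0 := by
  intro n
  induction n with
  | zero =>
    intro k hk
    apply h0
    intro h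
    rw [h] at hk
    simp at hk
  | succ m ih =>
    intro k hk
    have hk' : ((m:ℤ) + 1) < |k| := by push_cast at hk ⊢; linarith
    have h1 : (m:ℤ) < |k+1| := by
      have t : |k| ≤ |k+1| + 1 := by
        calc |k| = |(k+1) + (-1)| := by ring_nf
          _ ≤ |k+1| + |(-1:ℤ)| := abs_add_le _ _
          _ = |k+1| + 1 := by norm_num
      linarith
    have h2 : (m:ℤ) < |k-1| := by
      have t : |k| ≤ |k-1| + 1 := by
        calc |k| = |(k-1) + 1| := by ring_nf
          _ ≤ |k-1| + |(1:ℤ)| := abs_add_le _ _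
          _ = |k-1| + 1 := by norm_num
      linarith
    constructor
    · rw [hL, (ih (k+1) h1).1, (ih (k+1) h1).2]
      ring
    · rw [hR, (ih (k-1) h2).1, (ih (k-1) h2).2]
      ring

lemma walk_zeroL : ∀ (n : ℕ) (k : ℤ), k ∉ Finset.Icc (-(n:ℤ)) (n:ℤ) → ΨL (k,n) = 0 := by
  intro n k hk
  apply (walk_supp hL hR h0 n k ?_).1
  simp only [Finset.mem_Icc, not_and, not_le] at hk
  have hn0 : (0:ℤ) ≤ (n:ℤ) := Int.natCast_nonneg n
  rcases le_or_gt (-(n:ℤ)) k with h'|h'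
  · have := hk h'
    rw [_root_.abs_of_nonneg (by linarith : (0:ℤ) ≤ k)]
    linarith
  · rw [_root_.abs_of_neg (by linarith : k < 0)]
    linarith

lemma walk_zeroR : ∀ (n : ℕ) (k : ℤ), k ∉ Finset.Icc (-(n:ℤ)) (n:ℤ) → ΨR (k,n) = 0 := by
  intro n k hk
  apply (walk_supp hL hR h0 n k ?_).2
  simp only [Finset.mem_Icc, not_and, not_le] at hk
  have hn0 : (0:ℤ) ≤ (n:ℤ) := Int.natCast_nonneg n
  rcases le_or_gt (-(n:ℤ)) k with h'|h'
  · have := hk h'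
    rw [_root_.abs_of_nonneg (by linarith : (0:ℤ) ≤ k)]
    linarith
  · rw [_root_.abs_of_neg (by linarith : k < 0)]
    linarith

lemma walk_sumL (n : ℕ) (x : ℝ) : Summable (fun k : ℤ => ΨL (k,n) * Ek ((k:ℝ)*x)) :=
  summable_of_ne_finset_zero (s := Finset.Icc (-(n:ℤ)) (n:ℤ))
    (fun k hk => by rw [walk_zeroL hL hR h0 n k hk, zero_mul])

lemma walk_sumR (n : ℕ) (x : ℝ) : Summable (fun k : ℤ => ΨR (k,n) * Ek ((k:ℝ)*x)) :=
  summable_of_ne_finset_zero (s := Finset.Icc (-(n:ℤ)) (n:ℤ))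
    (fun k hk => by rw [walk_zeroR hL hR h0 n k hk, zero_mul])

lemma walk_frec (n : ℕ) (x : ℝ) :
    (∑' k : ℤ, ΨL (k,n+1) * Ek ((k:ℝ)*x))
      = (Ek x)⁻¹ * ((c:ℂ) * (∑' k : ℤ, ΨL (k,n) * Ek ((k:ℝ)*x))
        + (s:ℂ) * (∑' k : ℤ, ΨR (k,n) * Ek ((k:ℝ)*x))) := by
  have hterm : ∀ k : ℤ, ΨL (k, n+1) * Ek ((k:ℝ)*x)
      = (Ek x)⁻¹ * ((c:ℂ) * (ΨL (k+1,n) * Ek (((k+1:ℤ):ℝ)*x))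
        + (s:ℂ) * (ΨR (k+1,n) * Ek (((k+1:ℤ):ℝ)*x))) := by
    intro k
    rw [hL]
    have he : Ek (((k+1:ℤ):ℝ)*x) = Ek ((k:ℝ)*x) * Ek x := by
      rw [Ek_mul]
      congr 1
      push_cast
      ring
    rw [he]
    have hne := Ek_ne_zero x
    field_simp
  have hsA : Summable (fun k : ℤ => (c:ℂ) * (ΨL (k+1,n) * Ek (((k+1:ℤ):ℝ)*x))) := by
    apply Summable.mul_left
    exact ((Equiv.addRight (1:ℤ)).summable_iff).mpr (walk_sumL hL hR h0 n x)
  have hsB : Summable (fun k : ℤ => (s:ℂ) * (ΨR (k+1,n) * Ek (((k+1:ℤ):ℝ)*x))) := by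
    apply Summable.mul_left
    exact ((Equiv.addRight (1:ℤ)).summable_iff).mpr (walk_sumR hL hR h0 n x)
  calc (∑' k:ℤ, ΨL (k,n+1) * Ek ((k:ℝ)*x))
      = ∑' k:ℤ, (Ek x)⁻¹ * ((c:ℂ) * (ΨL (k+1,n) * Ek (((k+1:ℤ):ℝ)*x))
        + (s:ℂ) * (ΨR (k+1,n) * Ek (((k+1:ℤ):ℝ)*x))) := tsum_congr hterm
    _ = (Ek x)⁻¹ * ∑' k:ℤ, ((c:ℂ) * (ΨL (k+1,n) * Ek (((k+1:ℤ):ℝ)*x))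
        + (s:ℂ) * (ΨR (k+1,n) * Ek (((k+1:ℤ):ℝ)*x))) := by rw [tsum_mul_left]
    _ = (Ek x)⁻¹ * ((∑' k:ℤ, (c:ℂ) * (ΨL (k+1,n) * Ek (((k+1:ℤ):ℝ)*x)))
        + (∑' k:ℤ, (s:ℂ) * (ΨR (k+1,n) * Ek (((k+1:ℤ):ℝ)*x)))) := by rw [Summable.tsum_add hsA hsB]
    _ = (Ek x)⁻¹ * ((c:ℂ) * (∑' k:ℤ, (ΨL (k+1,n) * Ek (((k+1:ℤ):ℝ)*x)))
        + (s:ℂ) * (∑' k:ℤ, (ΨR (k+1,n) * Ek (((k+1:ℤ):ℝ)*x)))) := by rw [tsum_mul_left, tsum_mul_left]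
    _ = (Ek x)⁻¹ * ((c:ℂ) * (∑' k : ℤ, ΨL (k,n) * Ek ((k:ℝ)*x))
        + (s:ℂ) * (∑' k : ℤ, ΨR (k,n) * Ek ((k:ℝ)*x))) := by
        have hA : (∑' k:ℤ, (ΨL (k+1,n) * Ek (((k+1:ℤ):ℝ)*x)))
            = ∑' k : ℤ, ΨL (k,n) * Ek ((k:ℝ)*x) :=
          (Equiv.addRight (1:ℤ)).tsum_eq (fun k : ℤ => ΨL (k,n) * Ek ((k:ℝ)*x))
        have hB : (∑' k:ℤ, (ΨR (k+1,n) * Ek (((k+1:ℤ):ℝ)*x)))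
            = ∑' k : ℤ, ΨR (k,n) * Ek ((k:ℝ)*x) :=
          (Equiv.addRight (1:ℤ)).tsum_eq (fun k : ℤ => ΨR (k,n) * Ek ((k:ℝ)*x))
        rw [hA, hB]

lemma walk_grec (n : ℕ) (x : ℝ) :
    (∑' k : ℤ, ΨR (k,n+1) * Ek ((k:ℝ)*x))
      = Ek x * ((s:ℂ) * (∑' k : ℤ, ΨL (k,n) * Ek ((k:ℝ)*x))
        - (c:ℂ) * (∑' k : ℤ, ΨR (k,n) * Ek ((k:ℝ)*x))) := by
  have hterm : ∀ k : ℤ, ΨR (k, n+1) * Ek ((k:ℝ)*x)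
      = Ek x * ((s:ℂ) * (ΨL (k-1,n) * Ek (((k-1:ℤ):ℝ)*x))
        - (c:ℂ) * (ΨR (k-1,n) * Ek (((k-1:ℤ):ℝ)*x))) := by
    intro k
    rw [hR]
    have he : Ek ((k:ℝ)*x) = Ek (((k-1:ℤ):ℝ)*x) * Ek x := by
      rw [Ek_mul]
      congr 1
      push_cast
      ring
    rw [he]
    ring
  have hsA : Summable (fun k : ℤ => (s:ℂ) * (ΨL (k-1,n) * Ek (((k-1:ℤ):ℝ)*x))) := by
    apply Summable.mul_left
    exact ((Equiv.subRight (1:ℤ)).summable_iff).mpr (walk_sumL hL hR h0 n x)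
  have hsB : Summable (fun k : ℤ => (c:ℂ) * (ΨR (k-1,n) * Ek (((k-1:ℤ):ℝ)*x))) := by
    apply Summable.mul_left
    exact ((Equiv.subRight (1:ℤ)).summable_iff).mpr (walk_sumR hL hR h0 n x)
  calc (∑' k:ℤ, ΨR (k,n+1) * Ek ((k:ℝ)*x))
      = ∑' k:ℤ, Ek x * ((s:ℂ) * (ΨL (k-1,n) * Ek (((k-1:ℤ):ℝ)*x))
        - (c:ℂ) * (ΨR (k-1,n) * Ek (((k-1:ℤ):ℝ)*x))) := tsum_congr hterm
    _ = Ek x * ∑' k:ℤ, ((s:ℂ) * (ΨL (k-1,n) * Ek (((k-1:ℤ):ℝ)*x))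
        - (c:ℂ) * (ΨR (k-1,n) * Ek (((k-1:ℤ):ℝ)*x))) := by rw [tsum_mul_left]
    _ = Ek x * ((∑' k:ℤ, (s:ℂ) * (ΨL (k-1,n) * Ek (((k-1:ℤ):ℝ)*x)))
        - (∑' k:ℤ, (c:ℂ) * (ΨR (k-1,n) * Ek (((k-1:ℤ):ℝ)*x)))) := by rw [Summable.tsum_sub hsA hsB]
    _ = Ek x * ((s:ℂ) * (∑' k:ℤ, (ΨL (k-1,n) * Ek (((k-1:ℤ):ℝ)*x)))
        - (c:ℂ) * (∑' k:ℤ, (ΨR (k-1,n) * Ek (((k-1:ℤ):ℝ)*x)))) := by rw [tsum_mul_left, tsum_mul_left]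
    _ = Ek x * ((s:ℂ) * (∑' k : ℤ, ΨL (k,n) * Ek ((k:ℝ)*x))
        - (c:ℂ) * (∑' k : ℤ, ΨR (k,n) * Ek ((k:ℝ)*x))) := by
        have hA : (∑' k:ℤ, (ΨL (k-1,n) * Ek (((k-1:ℤ):ℝ)*x)))
            = ∑' k : ℤ, ΨL (k,n) * Ek ((k:ℝ)*x) :=
          (Equiv.subRight (1:ℤ)).tsum_eq (fun k : ℤ => ΨL (k,n) * Ek ((k:ℝ)*x))
        have hB : (∑' k:ℤ, (ΨR (k-1,n) * Ek (((k-1:ℤ):ℝ)*x)))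
            = ∑' k : ℤ, ΨR (k,n) * Ek ((k:ℝ)*x) :=
          (Equiv.subRight (1:ℤ)).tsum_eq (fun k : ℤ => ΨR (k,n) * Ek ((k:ℝ)*x))
        rw [hA, hB]

lemma walk_parseval (n : ℕ) :
    (∑' k : ℤ, ‖ΨL (k,n)‖^2)
      = (1/(2*π)) * ∫ x in (0:ℝ)..(2*π), ‖∑' k : ℤ, ΨL (k,n) * Ek ((k:ℝ)*x)‖^2 := by
  have hπ := Real.pi_pos
  set S := Finset.Icc (-(n:ℤ)) (n:ℤ) with hS
  have hfin : ∀ x : ℝ, (∑' k:ℤ, ΨL (k,n) * Ek ((k:ℝ)*x)) = ∑ k ∈ S, ΨL (k,n) * Ek ((k:ℝ)*x) :=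
    fun x => tsum_eq_sum (fun k hk => by rw [walk_zeroL hL hR h0 n k hk, zero_mul])
  have hL2 : (∑' k:ℤ, ‖ΨL (k,n)‖^2) = ∑ k ∈ S, ‖ΨL (k,n)‖^2 :=
    tsum_eq_sum (fun k hk => by rw [walk_zeroL hL hR h0 n k hk]; simp)
  have hprod : ∀ x : ℝ, (∑ k ∈ S, ΨL (k,n) * Ek ((k:ℝ)*x))
      * (starRingEnd ℂ) (∑ k ∈ S, ΨL (k,n) * Ek ((k:ℝ)*x))
      = ∑ k ∈ S, ∑ l ∈ S, (ΨL (k,n) * (starRingEnd ℂ) (ΨL (l,n))) * Ek (((k - l:ℤ):ℝ)*x) := by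
    intro x
    rw [map_sum, Finset.sum_mul_sum]
    apply Finset.sum_congr rfl
    intro k _
    apply Finset.sum_congr rfl
    intro l _
    rw [map_mul, conj_Ek, ← Ek_neg, mul_mul_mul_comm, Ek_mul]
    congr 2
    push_cast
    ring
  have hI : (∫ x in (0:ℝ)..(2*π), (∑ k ∈ S, ΨL (k,n) * Ek ((k:ℝ)*x))
      * (starRingEnd ℂ) (∑ k ∈ S, ΨL (k,n) * Ek ((k:ℝ)*x)))
      = ((2*π:ℝ):ℂ) * ∑ k ∈ S, (ΨL (k,n) * (starRingEnd ℂ) (ΨL (k,n))) := by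
    rw [intervalIntegral.integral_congr (fun x _ => hprod x)]
    rw [intervalIntegral.integral_finset_sum (fun k _ => ?_)]
    swap
    · apply Continuous.intervalIntegrable
      apply continuous_finset_sum
      intro l _
      exact continuous_const.mul (cont_Ek _)
    have hinner : ∀ k ∈ S, (∫ x in (0:ℝ)..(2*π),
        ∑ l ∈ S, (ΨL (k,n) * (starRingEnd ℂ) (ΨL (l,n))) * Ek (((k - l:ℤ):ℝ)*x))
        = (ΨL (k,n) * (starRingEnd ℂ) (ΨL (k,n))) * ((2*π:ℝ):ℂ) := by
      intro k hk
      rw [intervalIntegral.integral_finset_sum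
        (f := fun l x => (ΨL (k,n) * (starRingEnd ℂ) (ΨL (l,n))) * Ek (((k - l:ℤ):ℝ)*x)) (fun l _ =>
        (continuous_const.mul (cont_Ek _)).intervalIntegrable _ _)]
      have hterm : ∀ l ∈ S, (∫ x in (0:ℝ)..(2*π),
          (ΨL (k,n) * (starRingEnd ℂ) (ΨL (l,n))) * Ek (((k - l:ℤ):ℝ)*x))
          = (ΨL (k,n) * (starRingEnd ℂ) (ΨL (l,n))) * (if k - l = 0 then ((2*π:ℝ):ℂ) else 0) := by
        intro l _
        rw [intervalIntegral.integral_const_mul, intEk]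
      rw [Finset.sum_congr rfl hterm]
      rw [Finset.sum_eq_single_of_mem k hk]
      · rw [sub_self]
        simp
      · intro l _ hl
        rw [if_neg (sub_ne_zero.mpr (Ne.symm hl))]
        rw [mul_zero]
    rw [Finset.sum_congr rfl hinner, ← Finset.sum_mul]
    ring
  have hpt : ∀ x : ℝ, ((‖∑' k : ℤ, ΨL (k,n) * Ek ((k:ℝ)*x)‖^2 : ℝ) : ℂ)
      = (∑ k ∈ S, ΨL (k,n) * Ek ((k:ℝ)*x))
        * (starRingEnd ℂ) (∑ k ∈ S, ΨL (k,n) * Ek ((k:ℝ)*x)) := by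
    intro x
    rw [mul_conj_eq, hfin x]
  have hreal : ((∫ x in (0:ℝ)..(2*π), ‖∑' k : ℤ, ΨL (k,n) * Ek ((k:ℝ)*x)‖^2 : ℝ) : ℂ)
      = ((2*π:ℝ):ℂ) * ∑ k ∈ S, (ΨL (k,n) * (starRingEnd ℂ) (ΨL (k,n))) := by
    rw [← hI, ← intervalIntegral.integral_ofReal]
    exact intervalIntegral.integral_congr (fun x _ => hpt x)
  have hsum : (∑ k ∈ S, (ΨL (k,n) * (starRingEnd ℂ) (ΨL (k,n))))
      = ((∑ k ∈ S, ‖ΨL (k,n)‖^2 : ℝ) : ℂ) := by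
    rw [Complex.ofReal_sum]
    apply Finset.sum_congr rfl
    intro k _
    rw [mul_conj_eq]
  rw [hsum] at hreal
  have hfinal : (∫ x in (0:ℝ)..(2*π), ‖∑' k : ℤ, ΨL (k,n) * Ek ((k:ℝ)*x)‖^2 : ℝ)
      = (2*π) * ∑ k ∈ S, ‖ΨL (k,n)‖^2 := by
    exact_mod_cast hreal
  rw [hL2, hfinal]
  field_simp

include hL0 hR0 in
lemma walk_conserv (hcs : c^2 + s^2 = 1) :
    ∀ n : ℕ, (∑' k:ℤ, ‖ΨL (k,n)‖^2) + (∑' k:ℤ, ‖ΨR (k,n)‖^2) = 1 := by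
  have hsL : ∀ m : ℕ, Summable (fun k:ℤ => ‖ΨL (k,m)‖^2) := fun m =>
    summable_of_ne_finset_zero (s := Finset.Icc (-(m:ℤ)) m)
      (fun k hk => by rw [walk_zeroL hL hR h0 m k hk]; simp)
  have hsR : ∀ m : ℕ, Summable (fun k:ℤ => ‖ΨR (k,m)‖^2) := fun m =>
    summable_of_ne_finset_zero (s := Finset.Icc (-(m:ℤ)) m)
      (fun k hk => by rw [walk_zeroR hL hR h0 m k hk]; simp)
  intro n
  induction n with
  | zero =>
    have e1 : (∑' k:ℤ, ‖ΨL (k,0)‖^2) = 1 := by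
      rw [tsum_eq_sum (s := {(0:ℤ)}) (fun b hb => by
        rw [(h0 b (by simpa using hb)).1]; simp)]
      rw [Finset.sum_singleton, hL0]
      simp
    have e2 : (∑' k:ℤ, ‖ΨR (k,0)‖^2) = 0 := by
      rw [tsum_eq_sum (s := {(0:ℤ)}) (fun b hb => by
        rw [(h0 b (by simpa using hb)).2]; simp)]
      rw [Finset.sum_singleton, hR0]
      simp
    rw [e1, e2]
    norm_num
  | succ m ih =>
    have hsX : Summable (fun k:ℤ => ‖(c:ℂ) * ΨL (k,m) + (s:ℂ) * ΨR (k,m)‖^2) :=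
      summable_of_ne_finset_zero (s := Finset.Icc (-(m:ℤ)) m)
        (fun k hk => by rw [walk_zeroL hL hR h0 m k hk, walk_zeroR hL hR h0 m k hk]; simp)
    have hsY : Summable (fun k:ℤ => ‖(s:ℂ) * ΨL (k,m) - (c:ℂ) * ΨR (k,m)‖^2) :=
      summable_of_ne_finset_zero (s := Finset.Icc (-(m:ℤ)) m)
        (fun k hk => by rw [walk_zeroL hL hR h0 m k hk, walk_zeroR hL hR h0 m k hk]; simp)
    have eL : (∑' k:ℤ, ‖ΨL (k,m+1)‖^2)
        = ∑' k:ℤ, ‖(c:ℂ) * ΨL (k,m) + (s:ℂ) * ΨR (k,m)‖^2 := by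
      rw [tsum_congr (fun k => by rw [hL k m])]
      exact (Equiv.addRight (1:ℤ)).tsum_eq
        (fun k:ℤ => ‖(c:ℂ) * ΨL (k,m) + (s:ℂ) * ΨR (k,m)‖^2)
    have eR : (∑' k:ℤ, ‖ΨR (k,m+1)‖^2)
        = ∑' k:ℤ, ‖(s:ℂ) * ΨL (k,m) - (c:ℂ) * ΨR (k,m)‖^2 := by
      rw [tsum_congr (fun k => by rw [hR k m])]
      exact (Equiv.subRight (1:ℤ)).tsum_eq
        (fun k:ℤ => ‖(s:ℂ) * ΨL (k,m) - (c:ℂ) * ΨR (k,m)‖^2)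
    rw [eL, eR, ← Summable.tsum_add hsX hsY]
    rw [tsum_congr (fun k => chiral_identity hcs (ΨL (k,m)) (ΨR (k,m)))]
    rw [Summable.tsum_add (hsL m) (hsR m)]
    exact ih

end walk
end QW19

open QW19 Real MeasureTheory in
theorem stmt19 (θ : ℝ) (hθ : θ ∈ Set.Ioo 0 (Real.pi / 2)) (ΨL ΨR : ℤ × ℕ → ℂ)
    (hL : ∀ (k : ℤ) (n : ℕ),
      ΨL (k, n + 1) = (Real.cos θ : ℂ) * ΨL (k + 1, n) + (Real.sin θ : ℂ) * ΨR (k + 1, n))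
    (hR : ∀ (k : ℤ) (n : ℕ),
      ΨR (k, n + 1) = (Real.sin θ : ℂ) * ΨL (k - 1, n) - (Real.cos θ : ℂ) * ΨR (k - 1, n))
    (hL0 : ΨL (0, 0) = 1) (hR0 : ΨR (0, 0) = 0)
    (h0 : ∀ k : ℤ, k ≠ 0 → ΨL (k, 0) = 0 ∧ ΨR (k, 0) = 0) :
    Filter.Tendsto (fun n : ℕ => ∑' k : ℤ, ‖ΨL (k, n)‖ ^ 2) Filter.atTop
      (nhds (1 - Real.sin θ / 2)) ∧
    Filter.Tendsto (fun n : ℕ => ∑' k : ℤ, ‖ΨR (k, n)‖ ^ 2) Filter.atTop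
      (nhds (Real.sin θ / 2)) := by
  obtain ⟨hθ1, hθ2⟩ := hθ
  have hπ := Real.pi_pos
  set c := Real.cos θ with hcdef
  set s := Real.sin θ with hsdef
  have hc : 0 < c := Real.cos_pos_of_mem_Ioo ⟨by linarith, hθ2⟩
  have hs : 0 < s := Real.sin_pos_of_pos_of_lt_pi hθ1 (by linarith)
  have hcs : c^2 + s^2 = 1 := by
    rw [hcdef, hsdef]
    exact Real.cos_sq_add_sin_sq θ
  -- closed form for the Fourier transform
  have hfc : ∀ (x : ℝ) (m : ℕ), (∑' k : ℤ, ΨL (k,m) * Ek ((k:ℝ)*x)) = F c m x := by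
    intro x
    set fcx : ℕ → ℂ := fun m => ∑' k : ℤ, ΨL (k,m) * Ek ((k:ℝ)*x) with hfcx
    set gcx : ℕ → ℂ := fun m => ∑' k : ℤ, ΨR (k,m) * Ek ((k:ℝ)*x) with hgcx
    have hf0 : fcx 0 = 1 := by
      show (∑' k : ℤ, ΨL (k,0) * Ek ((k:ℝ)*x)) = 1
      rw [tsum_eq_sum (s := {(0:ℤ)}) (fun b hb => by
        rw [(h0 b (by simpa using hb)).1, zero_mul])]
      rw [Finset.sum_singleton, hL0]
      have : ((0:ℤ):ℝ) * x = 0 := by push_cast; ring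
      rw [this, Ek_zero, one_mul]
    have hg0 : gcx 0 = 0 := by
      show (∑' k : ℤ, ΨR (k,0) * Ek ((k:ℝ)*x)) = 0
      rw [tsum_eq_sum (s := {(0:ℤ)}) (fun b hb => by
        rw [(h0 b (by simpa using hb)).2, zero_mul])]
      rw [Finset.sum_singleton, hR0, zero_mul]
    have hrecf : ∀ m, fcx (m+1) = (Ek x)⁻¹ * ((c:ℂ)*fcx m + (s:ℂ)*gcx m) :=
      fun m => walk_frec hL hR h0 m x
    have hrecg : ∀ m, gcx (m+1) = Ek x * ((s:ℂ)*fcx m - (c:ℂ)*gcx m) :=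
      fun m => walk_grec hL hR h0 m x
    have hu : Ek x ≠ 0 := Ek_ne_zero x
    have huu : Ek x * (Ek x)⁻¹ = 1 := mul_inv_cancel₀ hu
    have hsc : (c:ℂ)^2 + (s:ℂ)^2 = 1 := by
      exact_mod_cast congrArg (fun r : ℝ => (r:ℂ)) hcs
    have h2step : ∀ m, fcx (m+2) = (c:ℂ) * ((Ek x)⁻¹ - Ek x) * fcx (m+1) + fcx m := by
      intro m
      have h1 := hrecf (m+1)
      have h2 := hrecg m
      have h3 := hrecf m
      have e3 : (s:ℂ) * gcx m = Ek x * fcx (m+1) - (c:ℂ) * fcx m := by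
        rw [h3]
        field_simp
        ring
      have e2 : (s:ℂ) * gcx (m+1) = Ek x * fcx m - (c:ℂ) * (Ek x)^2 * fcx (m+1) := by
        linear_combination (s:ℂ) * h2 + (-(Ek x * (c:ℂ))) * e3 + (Ek x * fcx m) * hsc
      linear_combination h1 + (Ek x)⁻¹ * e2 + (fcx m - (c:ℂ)*Ek x*fcx (m+1)) * huu
    have hboth : ∀ m, fcx m = F c m x ∧ fcx (m+1) = F c (m+1) x := by
      intro m
      induction m with
      | zero =>
        constructor
        · rw [hf0, F_zero hc hs hcs (s := s)]
        · have h := hrecf 0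
          rw [hf0, hg0] at h
          rw [h, F_one hc hs hcs (s := s)]
          ring
      | succ p ih =>
        refine ⟨ih.2, ?_⟩
        rw [h2step p, F_rec hc hs hcs (s := s) p x, ih.1, ih.2]
    exact fun m => (hboth m).1
  -- key identity for the probability
  have key : ∀ n:ℕ, (∑' k : ℤ, ‖ΨL (k, n)‖ ^ 2)
      = (1 - s/2) + (-1:ℝ)^n * ((s^2/(4*π)) * ∫ x in (0:ℝ)..(2*π),
          hh c x * Real.cos (2*n*om c x)) := by
    intro n
    rw [walk_parseval hL hR h0 n]
    have hnorm : ∀ x : ℝ, ‖(∑' k : ℤ, ΨL (k,n) * Ek ((k:ℝ)*x))‖^2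
        = (1 - s^2/2 * hh c x) + (-1:ℝ)^n * (s^2/2) * (hh c x * Real.cos (2*n*om c x)) := by
      intro x
      rw [hfc x n]
      have h1 := F_normsq (c := c) n x
      rw [mul_conj_eq] at h1
      have h2 : ‖F c n x‖^2 = (af c x) ^ 2 + (bf c x) ^ 2
          + 2 * af c x * bf c x * (-1 : ℝ) ^ n * Real.cos (2 * n * om c x) := by
        exact_mod_cast h1
      rw [h2, af_bf_sq hc hs hcs]
      linear_combination (2*(-1:ℝ)^n*Real.cos (2*(n:ℝ)*om c x)) * (af_mul_bf hc hs hcs x)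
    rw [intervalIntegral.integral_congr (fun x _ => hnorm x)]
    have hcos_cont : Continuous (fun x => hh c x * Real.cos (2*n*om c x)) :=
      (cont_hh hc hs hcs (s := s)).mul
        (Real.continuous_cos.comp (continuous_const.mul (cont_om (c := c))))
    have hhint : IntervalIntegrable (fun x => hh c x * Real.cos (2*n*om c x)) volume 0 (2*π) :=
      hcos_cont.intervalIntegrable _ _
    have hint1 : IntervalIntegrable (fun x => 1 - s^2/2 * hh c x) volume 0 (2*π) :=
      (continuous_const.sub (continuous_const.mul (cont_hh hc hs hcs (s := s)))).intervalIntegrable _ _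
    have hint2 : IntervalIntegrable (fun x => (-1:ℝ)^n * (s^2/2) * (hh c x * Real.cos (2*n*om c x)))
        volume 0 (2*π) := (hhint.const_mul _)
    rw [intervalIntegral.integral_add hint1 hint2]
    rw [intervalIntegral.integral_const_mul]
    rw [intervalIntegral.integral_sub (intervalIntegrable_const) ((hh_int hc hs hcs (s := s) 0 (2*π)).const_mul _)]
    rw [intervalIntegral.integral_const_mul, integral_hh_full hc hs hcs (s := s)]
    rw [intervalIntegral.integral_const]
    simp only [smul_eq_mul]
    field_simp
    ring
  -- limits
  have hJ := osc_tendsto hc hs hcs (s := s)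
  have hosc0 : Filter.Tendsto (fun n:ℕ => (-1:ℝ)^n * ((s^2/(4*π)) * ∫ x in (0:ℝ)..(2*π),
      hh c x * Real.cos (2*n*om c x))) Filter.atTop (nhds 0) := by
    have hg : Filter.Tendsto (fun n:ℕ => (s^2/(4*π)) * |∫ x in (0:ℝ)..(2*π),
        hh c x * Real.cos (2*n*om c x)|) Filter.atTop (nhds 0) := by
      have h1 : Filter.Tendsto (fun n:ℕ => |∫ x in (0:ℝ)..(2*π),
          hh c x * Real.cos (2*n*om c x)|) Filter.atTop (nhds 0) := by
        have := hJ.abs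
        simpa using this
      have h2 := h1.const_mul (s^2/(4*π))
      simpa using h2
    apply squeeze_zero_norm _ hg
    intro n
    apply le_of_eq
    rw [Real.norm_eq_abs, abs_mul, abs_mul, abs_pow, abs_neg, abs_one, one_pow, one_mul,
      _root_.abs_of_nonneg (by positivity : (0:ℝ) ≤ s^2/(4*π))]
  have hPlim : Filter.Tendsto (fun n : ℕ => ∑' k : ℤ, ‖ΨL (k, n)‖ ^ 2) Filter.atTop
      (nhds (1 - s / 2)) := by
    have heq : (fun n : ℕ => ∑' k : ℤ, ‖ΨL (k, n)‖ ^ 2)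
        = fun n : ℕ => (1 - s/2) + (-1:ℝ)^n * ((s^2/(4*π)) * ∫ x in (0:ℝ)..(2*π),
          hh c x * Real.cos (2*n*om c x)) := funext key
    rw [heq]
    have hconst : Filter.Tendsto (fun _ : ℕ => (1 - s/2 : ℝ)) Filter.atTop (nhds (1 - s/2)) :=
      tendsto_const_nhds
    have := hconst.add hosc0
    simpa using this
  refine ⟨hPlim, ?_⟩
  have hcons := walk_conserv hL hR hL0 hR0 h0 hcs
  have heqR : (fun n : ℕ => ∑' k : ℤ, ‖ΨR (k, n)‖ ^ 2)
      = fun n : ℕ => 1 - ∑' k : ℤ, ‖ΨL (k, n)‖ ^ 2 := by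
    funext n
    have := hcons n
    linarith
  rw [heqR]
  have hconst : Filter.Tendsto (fun _ : ℕ => (1 : ℝ)) Filter.atTop (nhds 1) :=
    tendsto_const_nhds
  have h2 := hconst.sub hPlim
  have h3 : (1:ℝ) - (1 - s/2) = s/2 := by ring
  rwa [h3] at h2
end
end
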